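/- arXiv:1105.3663 — 9 statements merged into one kernel-verified Lean document; each statement's English description precedes it below -/
import Mathlib

section
/- Let G be a finite solvable group and H a subgroup of G with |G:H| a prime number. Then the quotient G/H_G of G by the normal core of H is supersolvable. -/
/-- A subgroup `H` of `G` is ℙ-subnormal if there is a chain of subgroups from `H` to `G`
with each consecutive index prime. -/
def PSubnormal {G : Type*} [Group G] (H : Subgroup G) : Prop :=
  ∃ (n : ℕ) (c : Fin (n + 1) → Subgroup G),
    c 0 = H ∧ c (Fin.last n) = ⊤ ∧
    ∀ i : Fin n, c i.castSucc ≤ c i.succ ∧ Nat.Prime ((c i.castSucc).relIndex (c i.succ))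

/-- A group is supersolvable if it has a normal series (all terms normal in `G`)
with cyclic factors. -/
def IsSupersolvable (G : Type*) [Group G] : Prop :=
  ∃ (n : ℕ) (c : Fin (n + 1) → Subgroup G),
    c 0 = ⊥ ∧ c (Fin.last n) = ⊤ ∧ (∀ i, (c i).Normal) ∧
    ∀ i : Fin n, c i.castSucc ≤ c i.succ ∧
      ∃ h : ((c i.castSucc).subgroupOf (c i.succ)).Normal,
        letI := h
        IsCyclic ((c i.succ) ⧸ ((c i.castSucc).subgroupOf (c i.succ)))

open Subgroup

/-- `MulAut` of `Multiplicative M` is isomorphic to `AddAut M` as a group. -/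
def mulAutMultiplicativeEquiv (M : Type*) [AddGroup M] :
    MulAut (Multiplicative M) ≃* Multiplicative (AddAut M) :=
  MulAutMultiplicative M

lemma aux_mulAut_cyclic {p : ℕ} (hp : p.Prime) {A : Type*} [Group A]
    (hA : Nat.card A = p) : IsCyclic (MulAut A) := by
  subst hA
  have : Fact (Nat.card A).Prime := ⟨hp⟩
  have hfin : Finite A := Nat.finite_of_card_ne_zero hp.pos.ne'
  have hc : IsCyclic A := isCyclic_of_prime_card rfl
  have e1 : MulAut (Multiplicative (ZMod (Nat.card A))) ≃* MulAut A :=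
    MulAut.congr (zmodCyclicMulEquiv hc)
  have e2 : MulAut (Multiplicative (ZMod (Nat.card A))) ≃* (ZMod (Nat.card A))ˣ :=
    (mulAutMultiplicativeEquiv _).trans (ZMod.AddAutEquivUnits _).toMultiplicative
  have : IsCyclic ((ZMod (Nat.card A))ˣ) := inferInstance
  exact isCyclic_of_surjective (e1.toMonoidHom.comp e2.symm.toMonoidHom)
    (e1.surjective.comp e2.symm.surjective)


theorem stmt_0 {G : Type*} [Group G] [Finite G] [Group.IsSolvable G] (H : Subgroup G)
    (hH : Nat.Prime H.index) : IsSupersolvable (G ⧸ H.normalCore) := by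
  set π := QuotientGroup.mk' H.normalCore with hπdef
  have hπ : Function.Surjective π := QuotientGroup.mk'_surjective _
  have hker : π.ker = H.normalCore := QuotientGroup.ker_mk' _
  set K : Subgroup (G ⧸ H.normalCore) := H.map π with hKdef
  have hKi : K.index = H.index :=
    H.index_map_eq hπ (by rw [hker]; exact H.normalCore_le)
  have hH' : Nat.Prime K.index := hKi ▸ hH
  have hKcore : K.normalCore = ⊥ := by
    have h1 : K.normalCore.comap π ≤ H := by
      have := Subgroup.comap_map_eq π H
      calc K.normalCore.comap π ≤ K.comap π := comap_mono K.normalCore_le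
        _ = H ⊔ π.ker := this
        _ = H := by rw [hker, sup_eq_left]; exact H.normalCore_le
    haveI : (K.normalCore.comap π).Normal := (K.normalCore_normal).comap π
    have h2 : K.normalCore.comap π ≤ H.normalCore := normal_le_normalCore.mpr h1
    have h3 : K.normalCore ≤ H.normalCore.map π :=
      (Subgroup.map_comap_eq_self_of_surjective hπ K.normalCore).ge.trans (map_mono h2)
    refine le_bot_iff.mp (h3.trans ?_)
    intro x hx
    obtain ⟨y, hy, rfl⟩ := hx
    have : y ∈ π.ker := by rw [hker]; exact hy
    simpa [Subgroup.mem_bot] using this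
  -- abbreviation
  set Q := G ⧸ H.normalCore with hQdef
  have htopbot : (⊤ : Subgroup Q) ≠ ⊥ := by
    intro h
    have : K = ⊤ := le_antisymm le_top (by rw [h]; exact bot_le)
    rw [this, Subgroup.index_top] at hH'
    exact hH'.ne_one rfl
  -- minimal n with derivedSeries = ⊥
  obtain ⟨m, hm⟩ := (isSolvable_def Q).mp inferInstance
  have hex : ∃ k, derivedSeries Q k = ⊥ := ⟨m, hm⟩
  classical
  have hnpos : Nat.find hex ≠ 0 := by
    intro h
    have := Nat.find_spec hex
    rw [h] at this
    exact htopbot this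
  obtain ⟨n', hn'⟩ : ∃ n', Nat.find hex = n' + 1 :=
    ⟨Nat.find hex - 1, (Nat.succ_pred_eq_of_pos (Nat.pos_of_ne_zero hnpos)).symm⟩
  set A : Subgroup Q := derivedSeries Q n' with hAdef
  have hAbot : A ≠ ⊥ := Nat.find_min hex (by omega)
  have hAcomm : ⁅A, A⁆ = ⊥ := by
    have := Nat.find_spec hex
    rw [hn'] at this
    exact this
  have hAcent : A ≤ centralizer (A : Set Q) :=
    Subgroup.commutator_eq_bot_iff_le_centralizer.mp hAcomm
  haveI hAnormal : A.Normal := derivedSeries_normal Q n'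
  -- A is not contained in K
  have hAnotK : ¬ A ≤ K := fun h => hAbot (le_bot_iff.mp (hKcore ▸ normal_le_normalCore.mpr h))
  -- A ⊔ K = ⊤
  have hsup : A ⊔ K = ⊤ := by
    have h1 := Subgroup.relIndex_mul_index (le_sup_right : K ≤ A ⊔ K)
    have h2 : (A ⊔ K).index ∣ K.index := Dvd.intro_left _ h1
    rcases (Nat.Prime.eq_one_or_self_of_dvd hH' _ h2) with h3 | h3
    · exact Subgroup.index_eq_one.mp h3
    · exfalso
      rw [h3] at h1
      have hpos : 0 < K.index := hH'.pos
      have h4 : K.relIndex (A ⊔ K) = 1 := by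
        have := Nat.eq_of_mul_eq_mul_right hpos (h1.trans (one_mul K.index).symm)
        exact this
      exact hAnotK (le_sup_left.trans (Subgroup.relIndex_eq_one.mp h4))
  -- normality of intersections
  have hnormal_inf : ∀ (C : Subgroup Q), C.Normal → A ≤ centralizer (C : Set Q) →
      (C ⊓ K).Normal := by
    intro C hCn hACcent
    rw [← normalizer_eq_top_iff]
    refine top_unique (hsup ▸ sup_le ?_ ?_)
    · intro a ha
      rw [mem_normalizer_iff]
      intro x
      constructor
      · intro hx
        have hcom : x * a = a * x := mem_centralizer_iff.mp (hACcent ha) x (mem_inf.mp hx).1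
        have hxx : a * x * a⁻¹ = x := by rw [← hcom]; group
        rwa [hxx]
      · intro hx
        have hcom : (a * x * a⁻¹) * a = a * (a * x * a⁻¹) :=
          mem_centralizer_iff.mp (hACcent ha) _ (mem_inf.mp hx).1
        have hxx : x = a * x * a⁻¹ := by
          apply mul_left_cancel (a := a)
          calc a * x = (a * x * a⁻¹) * a := by group
            _ = a * (a * x * a⁻¹) := hcom
        exact hxx ▸ hx
    · intro k hk
      rw [mem_normalizer_iff]
      intro x
      constructor
      · intro hx
        exact mem_inf.mpr ⟨hCn.conj_mem x (mem_inf.mp hx).1 k,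
          K.mul_mem (K.mul_mem hk (mem_inf.mp hx).2) (K.inv_mem hk)⟩
      · intro hx
        have h1 : k⁻¹ * (k * x * k⁻¹) * k⁻¹⁻¹ ∈ C ⊓ K :=
          mem_inf.mpr ⟨hCn.conj_mem _ (mem_inf.mp hx).1 k⁻¹,
            K.mul_mem (K.mul_mem (K.inv_mem hk) (mem_inf.mp hx).2) (K.inv_mem (K.inv_mem hk))⟩
        have hxx : k⁻¹ * (k * x * k⁻¹) * k⁻¹⁻¹ = x := by group
        exact hxx ▸ h1
  have hinf_bot : ∀ (C : Subgroup Q), C.Normal → A ≤ centralizer (C : Set Q) →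
      C ⊓ K = ⊥ := by
    intro C hCn hACcent
    haveI := hnormal_inf C hCn hACcent
    exact le_bot_iff.mp (hKcore ▸ normal_le_normalCore.mpr inf_le_right)
  have hAK : A ⊓ K = ⊥ := hinf_bot A hAnormal hAcent
  -- A is a complement of K
  have hcardAK : Nat.card A * Nat.card K = Nat.card Q := by
    have hcompl : Subgroup.IsComplement' A K :=
      Subgroup.isComplement'_of_disjoint_and_mul_eq_univ (disjoint_iff.mpr hAK)
        (by rw [← Subgroup.normal_mul, hsup, Subgroup.coe_top])
    exact hcompl.card_mul
  have hcardA : Nat.card A = K.index := by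
    have h1 : Nat.card K * K.index = Nat.card Q := K.card_mul_index
    have hKpos : 0 < Nat.card K := Nat.card_pos
    refine Nat.eq_of_mul_eq_mul_left hKpos ?_
    rw [mul_comm (Nat.card (K : Subgroup Q)) (Nat.card A)]
    omega
  -- the centralizer of A equals A
  set C : Subgroup Q := centralizer (A : Set Q) with hCdef
  have hCnormal : C.Normal := by
    constructor
    intro x hx g
    rw [hCdef, mem_centralizer_iff] at hx ⊢
    intro h hh
    have h1 : g⁻¹ * h * g ∈ (A : Set Q) := hAnormal.conj_mem' h hh g
    have h2 := hx _ h1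
    calc h * (g * x * g⁻¹) = g * ((g⁻¹ * h * g) * x) * g⁻¹ := by group
      _ = g * (x * (g⁻¹ * h * g)) * g⁻¹ := by rw [h2]
      _ = g * x * g⁻¹ * h := by group
  have hCA : C = A := by
    have hAC : A ≤ C := hAcent
    have hCK : C ⊓ K = ⊥ := hinf_bot C hCnormal (le_centralizer_iff.mpr hCdef.le)
    have hCsup : C ⊔ K = ⊤ := top_unique (hsup ▸ sup_le (le_sup_left.trans' hAC) le_sup_right)
    have hcardCK : Nat.card C * Nat.card K = Nat.card Q := by
      have hcompl : Subgroup.IsComplement' C K :=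
        Subgroup.isComplement'_of_disjoint_and_mul_eq_univ (disjoint_iff.mpr hCK)
          (by rw [← Subgroup.normal_mul, hCsup, Subgroup.coe_top])
      exact hcompl.card_mul
    have hKpos : 0 < Nat.card K := Nat.card_pos
    have hcards : Nat.card C = Nat.card A := by
      have := hcardCK.trans hcardAK.symm
      exact Nat.eq_of_mul_eq_mul_right hKpos this
    exact (Subgroup.eq_of_le_of_card_ge hAC hcards.le).symm
  -- Q ⧸ A is cyclic
  have hcardA' : Nat.card A = H.index := hcardA.trans hKi
  haveI hMA : IsCyclic (MulAut A) := aux_mulAut_cyclic hH hcardA'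
  have hQA : IsCyclic (Q ⧸ A) := by
    set f : Q →* MulAut A := MulAut.conjNormal with hfdef
    have hfkerC : f.ker = C := by
      ext x
      constructor
      · intro hx
        rw [hCdef, mem_centralizer_iff]
        intro h hh
        have h1 : f x ⟨h, hh⟩ = ⟨h, hh⟩ := by rw [hx]; rfl
        have h2 : x * h * x⁻¹ = h := congrArg Subtype.val h1
        calc h * x = x * (x⁻¹ * h * x) := by group
          _ = x * h := by
            congr 1
            have : x⁻¹ * (x * h * x⁻¹) * x = x⁻¹ * h * x := by rw [h2]
            calc x⁻¹ * h * x = x⁻¹ * (x * h * x⁻¹) * x := this.symm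
              _ = h := by group
      · intro hx
        rw [MonoidHom.mem_ker]
        ext a
        have h2 : (a : Q) * x = x * a := mem_centralizer_iff.mp (show x ∈ centralizer (A : Set Q) from hCdef ▸ hx) a a.2
        show x * (a : Q) * x⁻¹ = a
        rw [← h2]; group
    have hfker : f.ker = A := hfkerC.trans hCA
    haveI : IsCyclic f.range := inferInstance
    have e1 : Q ⧸ A ≃* Q ⧸ f.ker := QuotientGroup.quotientMulEquivOfEq hfker.symm
    have e2 : Q ⧸ f.ker ≃* f.range := QuotientGroup.quotientKerEquivRange f
    exact isCyclic_of_surjective (e2.symm.trans e1.symm).toMonoidHom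
      (e2.symm.trans e1.symm).surjective
  haveI : Fact (Nat.Prime H.index) := ⟨hH⟩
  have hAcyc : IsCyclic A := isCyclic_of_prime_card hcardA'
  haveI := hAcyc
  refine ⟨2, ![⊥, A, ⊤], rfl, rfl, ?_, ?_⟩
  · intro i
    fin_cases i
    · show (⊥ : Subgroup Q).Normal
      infer_instance
    · exact hAnormal
    · show (⊤ : Subgroup Q).Normal
      infer_instance
  · intro i
    fin_cases i
    · show (⊥ : Subgroup Q) ≤ A ∧ ∃ h : ((⊥ : Subgroup Q).subgroupOf A).Normal,
        letI := h
        IsCyclic (A ⧸ (⊥ : Subgroup Q).subgroupOf A)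
      refine ⟨bot_le, ?_⟩
      have hn : ((⊥ : Subgroup Q).subgroupOf A).Normal := by
        rw [Subgroup.bot_subgroupOf]; infer_instance
      haveI := hn
      exact ⟨hn, isCyclic_of_surjective (QuotientGroup.mk' _) (QuotientGroup.mk'_surjective _)⟩
    · show A ≤ (⊤ : Subgroup Q) ∧ ∃ h : (A.subgroupOf (⊤ : Subgroup Q)).Normal,
        letI := h
        IsCyclic ((⊤ : Subgroup Q) ⧸ A.subgroupOf (⊤ : Subgroup Q))
      refine ⟨le_top, ?_⟩
      haveI hn : (A.subgroupOf (⊤ : Subgroup Q)).Normal := inferInstance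
      refine ⟨hn, ?_⟩
      set g : Q →* ((⊤ : Subgroup Q) ⧸ A.subgroupOf (⊤ : Subgroup Q)) :=
        (QuotientGroup.mk' (A.subgroupOf (⊤ : Subgroup Q))).comp
          ((Subgroup.topEquiv (G := Q)).symm.toMonoidHom) with hgdef
      have hgsurj : Function.Surjective g :=
        (QuotientGroup.mk'_surjective _).comp (MulEquiv.surjective _)
      have hgker : ∀ a ∈ A, g a = 1 := by
        intro a ha
        rw [hgdef]
        simp only [MonoidHom.comp_apply, MulEquiv.coe_toMonoidHom, QuotientGroup.mk'_apply]
        rw [QuotientGroup.eq_one_iff]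
        simpa [Subgroup.mem_subgroupOf] using ha
      refine isCyclic_of_surjective (QuotientGroup.lift A g hgker) ?_
      intro y
      obtain ⟨x, hx⟩ := hgsurj y
      exact ⟨QuotientGroup.mk x, (QuotientGroup.lift_mk _ _ _).trans hx⟩
end

section
/- Let G be a finite group, p the largest prime divisor of |G|, and P a Sylow p-subgroup of G. If P is not normal in G, and H, K are subgroups of G with N_G(P) ≤ K ≤ H, then the index |H:K| is not a prime number. -/
theorem stmt_1 {G : Type*} [Group G] [Finite G] (p : ℕ) (hp : p.Prime)
    (hdvd : p ∣ Nat.card G) (hmaxp : ∀ q : ℕ, q.Prime → q ∣ Nat.card G → q ≤ p)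
    (P : Sylow p G) (hnn : ¬ (P : Subgroup G).Normal)
    (H K : Subgroup G) (hNK : Subgroup.normalizer ((P : Subgroup G) : Set G) ≤ K) (hKH : K ≤ H) :
    ¬ Nat.Prime (K.relIndex H) := by
  intro hq
  haveI : Fact p.Prime := ⟨hp⟩
  have hPH : (P : Subgroup G) ≤ H := le_trans Subgroup.le_normalizer (hNK.trans hKH)
  have hPK : (P : Subgroup G) ≤ K := le_trans Subgroup.le_normalizer hNK
  -- Sylow III inside a subgroup L containing N_G(P)
  have key : ∀ (L : Subgroup G) (hPL : (P : Subgroup G) ≤ L)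
      (hNL : Subgroup.normalizer ((P : Subgroup G) : Set G) ≤ L),
      (Subgroup.normalizer ((P : Subgroup G) : Set G)).relIndex L ≡ 1 [MOD p] := by
    intro L hPL hNL
    have h1 : Nat.card (Sylow p L) ≡ 1 [MOD p] := card_sylow_modEq_one p L
    have h2 : Nat.card (Sylow p L) =
        (Subgroup.normalizer (((P.subtype hPL : Sylow p L) : Subgroup L) : Set L)).index :=
      Sylow.card_eq_index_normalizer _
    rw [Sylow.coe_subtype, ← Subgroup.subgroupOf_normalizer_eq hPL] at h2
    rw [Subgroup.relIndex]
    rw [h2] at h1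
    exact h1
  have hH1 : (Subgroup.normalizer ((P : Subgroup G) : Set G)).relIndex H ≡ 1 [MOD p] :=
    key H hPH (hNK.trans hKH)
  have hK1 : (Subgroup.normalizer ((P : Subgroup G) : Set G)).relIndex K ≡ 1 [MOD p] :=
    key K hPK hNK
  have hmul : (Subgroup.normalizer ((P : Subgroup G) : Set G)).relIndex K * K.relIndex H =
      (Subgroup.normalizer ((P : Subgroup G) : Set G)).relIndex H :=
    Subgroup.relIndex_mul_relIndex _ _ _ hNK hKH
  have hq1 : K.relIndex H ≡ 1 [MOD p] := by
    calc K.relIndex H = 1 * K.relIndex H := (one_mul _).symm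
      _ ≡ (Subgroup.normalizer ((P : Subgroup G) : Set G)).relIndex K * K.relIndex H [MOD p] :=
        (hK1.symm.mul_right _)
      _ = (Subgroup.normalizer ((P : Subgroup G) : Set G)).relIndex H := hmul
      _ ≡ 1 [MOD p] := hH1
  -- K.relIndex H divides |G|
  have hdvdG : K.relIndex H ∣ Nat.card G := by
    have h1 : K.relIndex H ∣ Nat.card H := Subgroup.index_dvd_card _
    exact h1.trans (Subgroup.card_subgroup_dvd_card H)
  have hle : K.relIndex H ≤ p := hmaxp _ hq hdvdG
  have h2le : 2 ≤ K.relIndex H := hq.two_le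
  have hpd : p ∣ K.relIndex H - 1 := (Nat.modEq_iff_dvd' (by omega)).mp hq1.symm
  have := Nat.le_of_dvd (by omega) hpd
  omega
end

section
/- Let G be a finite group, p the largest prime divisor of |G|, P a Sylow p-subgroup of G which is not normal in G, and let K ≤ H ≤ G be subgroups with N_G(P) ≤ K. Then |H:K| ≡ 1 (mod p). -/
open Subgroup MulAction

lemma key {G : Type*} [Group G] [Finite G] {p : ℕ} [Fact p.Prime] (P : Sylow p G)
    (K : Subgroup G) (hNK : Subgroup.normalizer ((P : Subgroup G) : Set G) ≤ K) : K.index ≡ 1 [MOD p] := by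
  have hPK : (P : Subgroup G) ≤ K := le_trans Subgroup.le_normalizer hNK
  have hmod := P.2.card_modEq_card_fixedPoints (G ⧸ K)
  have hfix : fixedPoints P (G ⧸ K) = {(↑(1 : G) : G ⧸ K)} := by
    ext x
    induction x using QuotientGroup.induction_on with
    | H g =>
    simp only [Set.mem_singleton_iff, mem_fixedPoints]
    constructor
    · intro h
      have hQK : ((g⁻¹ • P : Sylow p G) : Subgroup G) ≤ K := by
        intro x hx
        rw [Sylow.coe_subgroup_smul, Subgroup.mem_smul_pointwise_iff_exists] at hx
        obtain ⟨y, hy, rfl⟩ := hx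
        have hyy := h ⟨y⁻¹, inv_mem hy⟩
        change ((y⁻¹ : G) • (↑g : G ⧸ K)) = ↑g at hyy
        rw [MulAction.Quotient.smul_mk, QuotientGroup.eq] at hyy
        simpa [MulAut.conj, mul_assoc] using hyy
      obtain ⟨k, hk⟩ := MulAction.exists_smul_eq K ((g⁻¹ • P).subtype hQK) (P.subtype hPK)
      rw [Sylow.smul_subtype] at hk
      have hk' := Sylow.subtype_injective hk
      rw [Subgroup.smul_def, ← mul_smul] at hk'
      have hmem : (↑k * g⁻¹ : G) ∈ Subgroup.normalizer ((P : Subgroup G) : Set G) :=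
        Sylow.smul_eq_iff_mem_normalizer.mp hk'
      have hgK : g⁻¹ ∈ K := by
        have := hNK hmem
        have := mul_mem (inv_mem k.2) this
        simpa using this
      rw [QuotientGroup.eq]
      simpa using inv_mem hgK
    · intro hx y
      rw [hx]
      change ((y : G) • ((1 : G) : G ⧸ K)) = ((1 : G) : G ⧸ K)
      rw [MulAction.Quotient.smul_mk, QuotientGroup.eq]
      simpa using inv_mem (hPK y.2)
  rw [hfix] at hmod
  simpa [Subgroup.index, Nat.card_unique] using hmod

theorem stmt_2 {G : Type*} [Group G] [Finite G] (p : ℕ) (hp : p.Prime)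
    (hdvd : p ∣ Nat.card G) (hmaxp : ∀ q : ℕ, q.Prime → q ∣ Nat.card G → q ≤ p)
    (P : Sylow p G) (hnn : ¬ (P : Subgroup G).Normal)
    (H K : Subgroup G) (hNK : Subgroup.normalizer ((P : Subgroup G) : Set G) ≤ K) (hKH : K ≤ H) :
    K.relIndex H ≡ 1 [MOD p] := by
  haveI : Fact p.Prime := ⟨hp⟩
  have hPH : (P : Subgroup G) ≤ H := le_trans Subgroup.le_normalizer (le_trans hNK hKH)
  have hnorm : Subgroup.normalizer ((P.subtype hPH : Subgroup H) : Set H) ≤ K.subgroupOf H := by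
    rw [Sylow.coe_subtype, ← Subgroup.subgroupOf_normalizer_eq hPH]
    exact Subgroup.comap_mono hNK
  exact key (P.subtype hPH) (K.subgroupOf H) hnorm
end

section
/- Let N be a normal subgroup of a finite group G and H a subgroup of G. If H is P-subnormal in G, then HN/N is P-subnormal in G/N. -/
lemma psubnormal_top {G : Type*} [Group G] : PSubnormal (⊤ : Subgroup G) :=
  ⟨0, fun _ => ⊤, rfl, rfl, fun i => i.elim0⟩

lemma psubnormal_prepend {G : Type*} [Group G] {H K : Subgroup G} (hle : H ≤ K)
    (hp : Nat.Prime (H.relIndex K)) (hK : PSubnormal K) : PSubnormal H := by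
  obtain ⟨n, c, h0, hl, hs⟩ := hK
  refine ⟨n + 1, Fin.cons H c, Fin.cons_zero _ _, ?_, ?_⟩
  · rw [show Fin.last (n + 1) = (Fin.last n).succ from rfl, Fin.cons_succ, hl]
  · intro i
    refine Fin.cases ?_ ?_ i
    · simpa [Fin.castSucc_zero, show (0 : Fin (n+1)).succ = Fin.succ 0 from rfl,
        Fin.cons_succ, h0] using ⟨hle, hp⟩
    · intro j
      have h1 : (Fin.cons H c : Fin (n+2) → Subgroup G) j.succ.castSucc = c j.castSucc := by
        rw [← Fin.succ_castSucc, Fin.cons_succ]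
      have h2 : (Fin.cons H c : Fin (n+2) → Subgroup G) j.succ.succ = c j.succ := by
        rw [Fin.cons_succ]
      rw [h1, h2]
      exact hs j

lemma relindex_map_dvd {G : Type*} [Group G] (N : Subgroup G) [N.Normal]
    (H K : Subgroup G) :
    ((H.map (QuotientGroup.mk' N)).relIndex (K.map (QuotientGroup.mk' N))) ∣ H.relIndex K := by
  have h1 : ((H.map (QuotientGroup.mk' N)).comap (QuotientGroup.mk' N)).relIndex K
      = (H.map (QuotientGroup.mk' N)).relIndex (K.map (QuotientGroup.mk' N)) :=
    Subgroup.relIndex_comap _ _ _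
  rw [Subgroup.comap_map_eq, QuotientGroup.ker_mk'] at h1
  rw [← h1]
  exact Subgroup.relIndex_dvd_of_le_left K le_sup_left

lemma psubnormal_map_aux {G : Type*} [Group G] [Finite G] (N : Subgroup G) [N.Normal] :
    ∀ (n : ℕ) (c : Fin (n + 1) → Subgroup G), c (Fin.last n) = ⊤ →
    (∀ i : Fin n, c i.castSucc ≤ c i.succ ∧ Nat.Prime ((c i.castSucc).relIndex (c i.succ))) →
    PSubnormal ((c 0).map (QuotientGroup.mk' N)) := by
  intro n
  induction n with
  | zero =>
    intro c hl _
    rw [show (0 : Fin 1) = Fin.last 0 from rfl, hl]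
    rw [Subgroup.map_top_of_surjective _ (QuotientGroup.mk'_surjective N)]
    exact psubnormal_top
  | succ n ih =>
    intro c hl hs
    have IH : PSubnormal (((c ∘ Fin.succ) 0).map (QuotientGroup.mk' N)) := by
      refine ih (c ∘ Fin.succ) ?_ ?_
      · rw [Function.comp_apply, Fin.succ_last, hl]
      · intro i
        have h1 : (c ∘ Fin.succ) i.castSucc = c i.succ.castSucc := by
          simp only [Function.comp_apply, Fin.succ_castSucc]
        have h2 : (c ∘ Fin.succ) i.succ = c i.succ.succ := rfl
        rw [h1, h2]
        exact hs i.succ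
    simp only [Function.comp_apply] at IH
    have hstep := hs 0
    have hle : (c (0 : Fin (n+1)).castSucc).map (QuotientGroup.mk' N)
        ≤ (c (0 : Fin (n+1)).succ).map (QuotientGroup.mk' N) :=
      Subgroup.map_mono hstep.1
    have hdvd := relindex_map_dvd N (c (0 : Fin (n+1)).castSucc) (c (0 : Fin (n+1)).succ)
    have h0 : c (0 : Fin (n+2)) = c (0 : Fin (n+1)).castSucc := by norm_num
    have h1 : c (Fin.succ 0) = c (0 : Fin (n+1)).succ := rfl
    rw [h0]
    rcases (hstep.2.eq_one_or_self_of_dvd _ hdvd) with h | h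
    · have : (c (0 : Fin (n+1)).succ).map (QuotientGroup.mk' N)
          ≤ (c (0 : Fin (n+1)).castSucc).map (QuotientGroup.mk' N) :=
        Subgroup.relIndex_eq_one.mp h
      rw [le_antisymm hle this]
      rw [h1] at IH; exact IH
    · refine psubnormal_prepend hle ?_ ?_
      · rw [h]; exact hstep.2
      · rw [h1] at IH; exact IH

theorem stmt_3 {G : Type*} [Group G] [Finite G] (N : Subgroup G) [N.Normal]
    (H : Subgroup G) (hH : PSubnormal H) :
    PSubnormal (H.map (QuotientGroup.mk' N)) := by
  obtain ⟨n, c, h0, hl, hs⟩ := hH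
  rw [← h0]
  exact psubnormal_map_aux N n c hl hs
end

section
/- Let N be a normal subgroup of a finite group G and H a subgroup of G containing N. If H/N is P-subnormal in G/N, then H is P-subnormal in G. -/
theorem stmt_4 {G : Type*} [Group G] [Finite G] (N H : Subgroup G) [N.Normal]
    (hNH : N ≤ H) (h : PSubnormal (H.map (QuotientGroup.mk' N))) :
    PSubnormal H := by
  obtain ⟨n, c, hc0, hclast, hstep⟩ := h
  refine ⟨n, fun i => (c i).comap (QuotientGroup.mk' N), ?_, ?_, fun i => ?_⟩
  · simp only []
    rw [hc0, Subgroup.comap_map_eq_self]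
    rwa [QuotientGroup.ker_mk']
  · simp only []
    rw [hclast, Subgroup.comap_top]
  · refine ⟨Subgroup.comap_mono (hstep i).1, ?_⟩
    rw [Subgroup.relIndex_comap,
      Subgroup.map_comap_eq_self_of_surjective (QuotientGroup.mk'_surjective N)]
    exact (hstep i).2
end

section
/- Let N be a normal subgroup of a finite group G and H a P-subnormal subgroup of G. Then H ∩ N is P-subnormal in N. -/
open Subgroup

private lemma aux_relindex_mul_card {G : Type*} [Group G] (H N : Subgroup G) (h : H ≤ N) :
    H.relIndex N * Nat.card H = Nat.card N := by
  have := Subgroup.index_mul_card (H.subgroupOf N)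
  rwa [Nat.card_congr (subgroupOfEquivOfLe h).toEquiv] at this

private lemma aux_relindex_sup {G : Type*} [Group G] [Finite G] (H N : Subgroup G) [N.Normal] :
    H.relIndex (H ⊔ N) = H.relIndex N := by
  have h1 : H.relIndex N * Nat.card (H ⊓ N : Subgroup G) = Nat.card N := by
    rw [← inf_relIndex_right H N]
    exact aux_relindex_mul_card _ _ inf_le_right
  have h2 : H.relIndex (H ⊔ N) * Nat.card H = Nat.card (H ⊔ N : Subgroup G) := by
    rw [← inf_relIndex_right H (H ⊔ N), inf_of_le_left (le_sup_left : H ≤ H ⊔ N)]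
    exact aux_relindex_mul_card _ _ le_sup_left
  have h3 : N.relIndex (H ⊔ N) * Nat.card N = Nat.card (H ⊔ N : Subgroup G) := by
    rw [← inf_relIndex_right N (H ⊔ N), inf_of_le_left (le_sup_right : N ≤ H ⊔ N)]
    exact aux_relindex_mul_card _ _ le_sup_right
  have h4 : N.relIndex H * Nat.card (H ⊓ N : Subgroup G) = Nat.card H := by
    rw [← inf_relIndex_right N H, inf_comm N H]
    exact aux_relindex_mul_card _ _ inf_le_left
  have h5 : N.relIndex (H ⊔ N) = N.relIndex H := relIndex_sup_right H N
  have hpos : 0 < N.relIndex H * Nat.card (H ⊓ N : Subgroup G) := by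
    rw [h4]; exact Nat.card_pos
  have key : H.relIndex (H ⊔ N) * (N.relIndex H * Nat.card (H ⊓ N : Subgroup G)) =
      H.relIndex N * (N.relIndex H * Nat.card (H ⊓ N : Subgroup G)) := by
    rw [h4, h2, ← h3, h5, ← h1, ← h4]
    ring
  exact Nat.eq_of_mul_eq_mul_right hpos key

private lemma aux_relindex_dvd_index {G : Type*} [Group G] [Finite G] (H N : Subgroup G)
    [N.Normal] : H.relIndex N ∣ H.index := by
  rw [← aux_relindex_sup H N]
  exact relIndex_dvd_index_of_le le_sup_left

/-- The key divisibility: for `H ≤ K` and `N` normal,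
`|K ∩ N : H ∩ N|` divides `|K : H|`. -/
private lemma aux_key {G : Type*} [Group G] [Finite G] {H K : Subgroup G} (N : Subgroup G)
    [N.Normal] (hHK : H ≤ K) : (H ⊓ N).relIndex (K ⊓ N) ∣ H.relIndex K := by
  have h := aux_relindex_dvd_index (H.subgroupOf K) (N.subgroupOf K)
  have e1 : N.subgroupOf K = (K ⊓ N).subgroupOf K := by
    rw [inf_comm K N, inf_subgroupOf_right]
  rw [e1, relIndex_subgroupOf (inf_le_left : K ⊓ N ≤ K)] at h
  have e2 : (H.subgroupOf K).index = H.relIndex K := rfl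
  rw [e2] at h
  have e3 : (H ⊓ N).relIndex (K ⊓ N) = H.relIndex (K ⊓ N) := by
    rw [← inf_relIndex_right H (K ⊓ N), ← inf_assoc, inf_of_le_left hHK]
  rwa [e3]

/-- Prepend one prime-index step to a ℙ-subnormal chain. -/
private lemma PSubnormal.step {G : Type*} [Group G] {A B : Subgroup G} (hAB : A ≤ B)
    (hp : Nat.Prime (A.relIndex B)) (hB : PSubnormal B) : PSubnormal A := by
  obtain ⟨n, c, h0, hl, hc⟩ := hB
  refine ⟨n + 1, Fin.cons A c, Fin.cons_zero _ _, ?_, ?_⟩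
  · rw [← Fin.succ_last, Fin.cons_succ]
    exact hl
  · intro i
    induction i using Fin.cases with
    | zero =>
      have e0 : (Fin.castSucc (0 : Fin (n + 1))) = 0 := rfl
      rw [e0, Fin.cons_zero, Fin.cons_succ, h0]
      exact ⟨hAB, hp⟩
    | succ j =>
      rw [← Fin.succ_castSucc, Fin.cons_succ, Fin.cons_succ]
      exact hc j

theorem stmt_7 {G : Type*} [Group G] [Finite G] (N : Subgroup G) [N.Normal]
    (H : Subgroup G) (hH : PSubnormal H) :
    PSubnormal ((H ⊓ N).subgroupOf N) := by
  obtain ⟨n, c, h0, hl, hc⟩ := hH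
  induction n generalizing H with
  | zero =>
    have hH : H = ⊤ := by rw [← h0]; exact hl
    rw [hH, top_inf_eq, subgroupOf_self]
    exact ⟨0, fun _ => ⊤, rfl, rfl, fun i => i.elim0⟩
  | succ n ih =>
    set K := c (Fin.succ 0) with hK
    have hKsub : PSubnormal ((K ⊓ N).subgroupOf N) := by
      refine ih K (fun i => c i.succ) rfl ?_ ?_
      · show c (Fin.last n).succ = ⊤
        rw [Fin.succ_last]; exact hl
      · intro i
        have := hc i.succ
        show c i.castSucc.succ ≤ c i.succ.succ ∧
          Nat.Prime ((c i.castSucc.succ).relIndex (c i.succ.succ))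
        rwa [Fin.succ_castSucc]
    have h01 := hc 0
    rw [Fin.castSucc_zero, h0] at h01
    obtain ⟨hle, hp⟩ := h01
    have hleN : H ⊓ N ≤ K ⊓ N := inf_le_inf_right N hle
    have hdvd : (H ⊓ N).relIndex (K ⊓ N) ∣ H.relIndex K := aux_key N hle
    rcases hp.eq_one_or_self_of_dvd _ hdvd with h1 | h1
    · -- relIndex = 1 : H ⊓ N = K ⊓ N
      have : K ⊓ N ≤ H ⊓ N := relIndex_eq_one.mp h1
      have heq : H ⊓ N = K ⊓ N := le_antisymm hleN this
      rw [heq]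
      exact hKsub
    · -- relIndex prime : prepend a step
      refine PSubnormal.step ?_ ?_ hKsub
      · exact comap_mono hleN
      · rw [relIndex_subgroupOf (inf_le_right : K ⊓ N ≤ N), h1]
        exact hp
end

section
/- Every subgroup of a finite supersolvable group G is P-subnormal in G. -/
open Subgroup

section Aux

variable {G : Type*} [Group G]

lemma psub_top : PSubnormal (⊤ : Subgroup G) :=
  ⟨0, fun _ => ⊤, rfl, rfl, fun i => i.elim0⟩

lemma psub_step {H K : Subgroup G} (hHK : H ≤ K) (hp : (H.relIndex K).Prime)
    (hK : PSubnormal K) : PSubnormal H := by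
  obtain ⟨m, d, h0, hl, hstep⟩ := hK
  refine ⟨m + 1, Fin.cases H d, ?_, ?_, ?_⟩
  · simp only [Fin.cases_zero]
  · rw [← Fin.succ_last]
    simp only [Fin.cases_succ]
    exact hl
  · intro i
    induction i using Fin.cases with
    | zero =>
      simp only [Fin.castSucc_zero, Fin.cases_zero, Fin.cases_succ, h0]
      exact ⟨hHK, hp⟩
    | succ j =>
      simp only [← Fin.succ_castSucc, Fin.cases_succ]
      exact hstep j

lemma card_eq_relindex_mul_card [Finite G] {A B : Subgroup G} (hAB : A ≤ B) :
    Nat.card B = A.relIndex B * Nat.card A := by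
  have h1 := Subgroup.index_mul_card (A.subgroupOf B)
  have h2 : Nat.card (A.subgroupOf B) = Nat.card A :=
    Nat.card_congr (Subgroup.subgroupOfEquivOfLe hAB).toEquiv
  rw [h2] at h1
  exact h1.symm

lemma cyclic_card_unique {Γ : Type*} [Group Γ] [Finite Γ] [IsCyclic Γ]
    {A B : Subgroup Γ} (h : Nat.card A = Nat.card B) : A = B := by
  classical
  have : Fintype Γ := Fintype.ofFinite Γ
  suffices key : ∀ C : Subgroup Γ, (C : Set Γ) = {x : Γ | x ^ Nat.card C = 1} by
    rw [SetLike.ext'_iff, key A, key B, h]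
  intro C
  have hpos : 0 < Nat.card C := Nat.card_pos
  refine Set.eq_of_subset_of_ncard_le ?_ ?_ (Set.toFinite _)
  · intro x hx
    have h1 : (⟨x, hx⟩ : C) ^ Nat.card C = 1 := pow_card_eq_one'
    have h2 := congrArg (Subtype.val) h1
    simp only [SubmonoidClass.coe_pow, OneMemClass.coe_one] at h2
    exact h2
  · have hb : {x : Γ | x ^ Nat.card C = 1}.ncard
        ≤ (Finset.univ.filter fun a : Γ => a ^ Nat.card C = 1).card := by
      rw [Set.ncard_eq_toFinset_card', Set.toFinset_setOf]
    have hb2 := IsCyclic.card_pow_eq_one_le (α := Γ) hpos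
    have hc : (C : Set Γ).ncard = Nat.card C := by
      rw [Set.ncard_eq_toFinset_card', Set.toFinset_card]
      simp [Nat.card_eq_fintype_card]
    omega

lemma normal_of_le_cyclic_normal [Finite G] {N P : Subgroup G} [hNn : N.Normal]
    (hC : IsCyclic N) (hPN : P ≤ N) : P.Normal := by
  constructor
  intro p hp g
  set φ := MulAut.conj g with hφ
  set P' := P.map φ.toMonoidHom with hP'
  have hP'N : P' ≤ N := by
    rintro x ⟨y, hy, rfl⟩
    exact hNn.conj_mem y (hPN hy) g
  have hcard : Nat.card P' = Nat.card P :=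
    (Nat.card_congr (Subgroup.equivMapOfInjective P _ (φ.injective)).toEquiv).symm
  have h1 : Nat.card (P'.subgroupOf N) = Nat.card (P.subgroupOf N) := by
    rw [Nat.card_congr (Subgroup.subgroupOfEquivOfLe hP'N).toEquiv,
      Nat.card_congr (Subgroup.subgroupOfEquivOfLe hPN).toEquiv, hcard]
  have h2 : P'.subgroupOf N = P.subgroupOf N := by
    haveI := hC
    exact cyclic_card_unique h1
  have h3 : P' = P := by
    have h4 := congrArg (fun S => Subgroup.map N.subtype S) h2
    simpa [Subgroup.subgroupOf_map_subtype, inf_eq_left.mpr hP'N, inf_eq_left.mpr hPN] using h4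
  have hmem : g * p * g⁻¹ ∈ P' := ⟨p, hp, rfl⟩
  rwa [h3] at hmem

lemma relindex_sup_of_normal [Finite G] {H P : Subgroup G} (hP : P.Normal) :
    H.relIndex (H ⊔ P) = (H ⊓ P).relIndex P := by
  haveI := hP
  have e1 : Nat.card (H ⊔ P : Subgroup G) = H.relIndex (H ⊔ P) * Nat.card H :=
    card_eq_relindex_mul_card le_sup_left
  have e2 : Nat.card (H ⊔ P : Subgroup G) = (H ⊓ P).relIndex H * Nat.card P := by
    rw [card_eq_relindex_mul_card (le_sup_right : P ≤ H ⊔ P), relIndex_sup_right,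
      ← inf_relIndex_right P H, inf_comm]
  have e4 : Nat.card H = (H ⊓ P).relIndex H * Nat.card (H ⊓ P : Subgroup G) :=
    card_eq_relindex_mul_card inf_le_left
  have e5 : Nat.card P = (H ⊓ P).relIndex P * Nat.card (H ⊓ P : Subgroup G) :=
    card_eq_relindex_mul_card inf_le_right
  have hm : 0 < Nat.card (H ⊓ P : Subgroup G) := Nat.card_pos
  have hs : 0 < (H ⊓ P).relIndex H := by
    rcases Nat.eq_zero_or_pos ((H ⊓ P).relIndex H) with h | h
    · rw [h, zero_mul] at e4
      exact absurd e4 (Nat.card_pos (α := H)).ne'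
    · exact h
  have key : H.relIndex (H ⊔ P) * ((H ⊓ P).relIndex H * Nat.card (H ⊓ P : Subgroup G))
      = (H ⊓ P).relIndex H * ((H ⊓ P).relIndex P * Nat.card (H ⊓ P : Subgroup G)) := by
    rw [← e4, ← e5, ← e1, ← e2]
  have key2 : H.relIndex (H ⊔ P) * (H ⊓ P).relIndex H * Nat.card (H ⊓ P : Subgroup G)
      = (H ⊓ P).relIndex P * (H ⊓ P).relIndex H * Nat.card (H ⊓ P : Subgroup G) := by
    calc H.relIndex (H ⊔ P) * (H ⊓ P).relIndex H * Nat.card (H ⊓ P : Subgroup G)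
        = H.relIndex (H ⊔ P) * ((H ⊓ P).relIndex H * Nat.card (H ⊓ P : Subgroup G)) := by ring
      _ = (H ⊓ P).relIndex H * ((H ⊓ P).relIndex P * Nat.card (H ⊓ P : Subgroup G)) := key
      _ = (H ⊓ P).relIndex P * (H ⊓ P).relIndex H * Nat.card (H ⊓ P : Subgroup G) := by ring
  exact Nat.eq_of_mul_eq_mul_right hs (Nat.eq_of_mul_eq_mul_right hm key2)

lemma exists_prime_step {Γ : Type*} [Group Γ] [Finite Γ] (A : Subgroup Γ) [hA : A.Normal]
    (hAt : A ≠ ⊤) : ∃ B : Subgroup Γ, A ≤ B ∧ (A.relIndex B).Prime := by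
  have hind : A.index ≠ 1 := by rwa [Ne, Subgroup.index_eq_one]
  obtain ⟨p, hp, hdvd⟩ := Nat.exists_prime_and_dvd hind
  haveI : Fact p.Prime := ⟨hp⟩
  obtain ⟨x, hx⟩ := exists_prime_orderOf_dvd_card' (G := Γ ⧸ A) p
    (by rwa [← Subgroup.index_eq_card])
  refine ⟨Subgroup.comap (QuotientGroup.mk' A) (Subgroup.zpowers x), ?_, ?_⟩
  · calc A = Subgroup.comap (QuotientGroup.mk' A) ⊥ := by
          rw [MonoidHom.comap_bot, QuotientGroup.ker_mk']
      _ ≤ _ := Subgroup.comap_mono bot_le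
  · set B := Subgroup.comap (QuotientGroup.mk' A) (Subgroup.zpowers x) with hB
    have hAB : A ≤ B := by
      calc A = Subgroup.comap (QuotientGroup.mk' A) ⊥ := by
            rw [MonoidHom.comap_bot, QuotientGroup.ker_mk']
        _ ≤ _ := Subgroup.comap_mono bot_le
    have h1 : A.relIndex B * B.index = A.index := Subgroup.relIndex_mul_index hAB
    have h2 : B.index = (Subgroup.zpowers x).index :=
      Subgroup.index_comap_of_surjective (Subgroup.zpowers x) (QuotientGroup.mk'_surjective A)
    have h3 : (Subgroup.zpowers x).index * p = A.index := by
      rw [← hx, ← Nat.card_zpowers, Subgroup.index_mul_card, Subgroup.index_eq_card]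
    have hB0 : B.index ≠ 0 := Subgroup.index_ne_zero_of_finite
    have : A.relIndex B = p := by
      rw [h2] at h1
      rw [← h3] at h1
      have hz : (Subgroup.zpowers x).index ≠ 0 := by rw [← h2]; exact hB0
      exact Nat.eq_of_mul_eq_mul_right (Nat.pos_of_ne_zero hz)
        (h1.trans (mul_comm (Subgroup.zpowers x).index p))
    rwa [this]

lemma psub_of_sup_cyclic [Finite G] {N : Subgroup G} [hNn : N.Normal] (hC : IsCyclic N) :
    ∀ H : Subgroup G, PSubnormal (H ⊔ N) → PSubnormal H := by
  suffices key : ∀ (k : ℕ) (H : Subgroup G), H.index = k → PSubnormal (H ⊔ N) → PSubnormal H by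
    exact fun H => key H.index H rfl
  intro k
  induction k using Nat.strong_induction_on with
  | _ k IH =>
    intro H hk hsup
    by_cases hN : N ≤ H
    · rwa [sup_eq_left.mpr hN] at hsup
    · letI : CommGroup ↥N := IsCyclic.commGroup
      have hAne : (H ⊓ N).subgroupOf N ≠ ⊤ := by
        rw [Ne, Subgroup.subgroupOf_eq_top]
        intro htop
        exact hN (le_inf_iff.mp htop).1
      obtain ⟨B, hAB, hprime⟩ := exists_prime_step ((H ⊓ N).subgroupOf N) hAne
      set P := Subgroup.map N.subtype B with hPdef
      have hPN : P ≤ N := Subgroup.map_subtype_le B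
      have hAP : H ⊓ N ≤ P := by
        have h4 := Subgroup.map_subtype_le_map_subtype.mpr hAB
        rwa [Subgroup.subgroupOf_map_subtype, inf_assoc, inf_idem] at h4
      have hPnormal : P.Normal := normal_of_le_cyclic_normal hC hPN
      have hBP : P.subgroupOf N = B :=
        Subgroup.comap_map_eq_self_of_injective N.subtype_injective B
      have hrel : (H ⊓ N).relIndex P = ((H ⊓ N).subgroupOf N).relIndex B := by
        rw [← Subgroup.relIndex_subgroupOf hPN, hBP]
      have hinf : H ⊓ P = H ⊓ N :=
        le_antisymm (inf_le_inf_left H hPN) (le_inf inf_le_left hAP)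
      have hrelHK : H.relIndex (H ⊔ P) = ((H ⊓ N).subgroupOf N).relIndex B := by
        rw [relindex_sup_of_normal hPnormal, hinf, hrel]
      have hprime' : (H.relIndex (H ⊔ P)).Prime := by rw [hrelHK]; exact hprime
      have hKsup : (H ⊔ P) ⊔ N = H ⊔ N := by
        rw [sup_assoc, sup_eq_right.mpr hPN]
      have hKlt : (H ⊔ P).index < k := by
        rw [← hk, ← Subgroup.relIndex_mul_index (le_sup_left : H ≤ H ⊔ P)]
        have h2 := hprime'.two_le
        have h0 : (H ⊔ P).index ≠ 0 := Subgroup.index_ne_zero_of_finite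
        calc (H ⊔ P).index = 1 * (H ⊔ P).index := (one_mul _).symm
          _ < H.relIndex (H ⊔ P) * (H ⊔ P).index :=
            (Nat.mul_lt_mul_right (Nat.pos_of_ne_zero h0)).mpr (by omega)
      have hK : PSubnormal (H ⊔ P) := by
        refine IH _ hKlt (H ⊔ P) rfl ?_
        rwa [hKsup]
      exact psub_step le_sup_left hprime' hK

lemma map_quot_cyclic {G₂ : Type*} [Group G₂] (f : G →* G₂) (hf : Function.Surjective f)
    {A B : Subgroup G} (hA : A.Normal) (hAB : A ≤ B)
    (hc : ∃ h : (A.subgroupOf B).Normal, letI := h;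
      IsCyclic (B ⧸ A.subgroupOf B)) :
    ∃ h : ((A.map f).subgroupOf (B.map f)).Normal, letI := h;
      IsCyclic ((B.map f) ⧸ (A.map f).subgroupOf (B.map f)) := by
  obtain ⟨hn, hcyc⟩ := hc
  haveI := hn
  haveI hn2 : ((A.map f).subgroupOf (B.map f)).Normal := (hA.map f hf).subgroupOf _
  refine ⟨hn2, ?_⟩
  haveI := hcyc
  set K := (A.map f).subgroupOf (B.map f) with hK
  set φ : ↥B →* ↥(B.map f) := f.subgroupMap B with hφ
  set χ : ↥B →* (↥(B.map f) ⧸ K) := (QuotientGroup.mk' K).comp φ with hχ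
  have hker : A.subgroupOf B ≤ χ.ker := by
    intro x hx
    have hmem : φ x ∈ K := by
      show f ↑x ∈ A.map f
      exact ⟨↑x, hx, rfl⟩
    simp only [hχ, MonoidHom.mem_ker, MonoidHom.comp_apply, QuotientGroup.mk'_apply]
    rwa [QuotientGroup.eq_one_iff]
  set ψ := QuotientGroup.lift (A.subgroupOf B) χ hker with hψ
  have hsurj : Function.Surjective ψ := by
    intro y
    obtain ⟨x, hx⟩ := QuotientGroup.mk'_surjective K y
    obtain ⟨b, hb⟩ := f.subgroupMap_surjective B x
    refine ⟨QuotientGroup.mk b, ?_⟩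
    rw [hψ, QuotientGroup.lift_mk]
    rw [hχ]
    simp only [MonoidHom.comp_apply]
    rw [hφ, hb]
    exact hx
  exact isCyclic_of_surjective ψ hsurj

end Aux

universe u

lemma psub_main_aux : ∀ (n : ℕ) (G : Type u) [Group G] [Finite G]
    (c : Fin (n + 1) → Subgroup G),
    c 0 = ⊥ → c (Fin.last n) = ⊤ → (∀ i, (c i).Normal) →
    (∀ i : Fin n, c i.castSucc ≤ c i.succ ∧
      ∃ h : ((c i.castSucc).subgroupOf (c i.succ)).Normal, letI := h;
        IsCyclic ((c i.succ) ⧸ ((c i.castSucc).subgroupOf (c i.succ)))) →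
    ∀ H : Subgroup G, PSubnormal H := by
  intro n
  induction n with
  | zero =>
    intro G _ _ c h0 hl _ _ H
    have hbt : (⊥ : Subgroup G) = ⊤ := by rw [← h0, ← hl]; rfl
    have hH : H = ⊤ := eq_top_iff.mpr (hbt ▸ bot_le)
    rw [hH]; exact psub_top
  | succ n IH =>
    intro G _ _ c h0 hl hnorm hstep H
    have hNn : (c (Fin.succ 0)).Normal := hnorm _
    haveI := hNn
    -- N := c (Fin.succ 0) is cyclic
    obtain ⟨hn1, hc1⟩ := (hstep 0).2
    haveI := hn1
    have heq : (c (Fin.castSucc 0)).subgroupOf (c (Fin.succ 0)) = ⊥ := by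
      rw [Fin.castSucc_zero, h0, Subgroup.bot_subgroupOf]
    have hNcyc : IsCyclic (c (Fin.succ 0)) := by
      haveI := hc1
      exact isCyclic_of_surjective
        (QuotientGroup.quotientBot.toMonoidHom.comp
          (QuotientGroup.quotientMulEquivOfEq heq).toMonoidHom)
        (QuotientGroup.quotientBot.surjective.comp
          (QuotientGroup.quotientMulEquivOfEq heq).surjective)
    set f := QuotientGroup.mk' (c (Fin.succ 0)) with hf
    have hfs : Function.Surjective f := QuotientGroup.mk'_surjective _
    set c' : Fin (n + 1) → Subgroup (G ⧸ c (Fin.succ 0)) :=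
      fun i => (c i.succ).map f with hc'
    have h0' : c' 0 = ⊥ := by
      show (c (Fin.succ 0)).map f = ⊥
      rw [Subgroup.map_eq_bot_iff, QuotientGroup.ker_mk']
    have hl' : c' (Fin.last n) = ⊤ := by
      show (c (Fin.last n).succ).map f = ⊤
      rw [Fin.succ_last, hl]
      exact Subgroup.map_top_of_surjective f hfs
    have hnorm' : ∀ i, (c' i).Normal := fun i => Subgroup.Normal.map (hnorm _) f hfs
    have hstep' : ∀ i : Fin n, c' i.castSucc ≤ c' i.succ ∧
        ∃ h : ((c' i.castSucc).subgroupOf (c' i.succ)).Normal, letI := h;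
          IsCyclic ((c' i.succ) ⧸ ((c' i.castSucc).subgroupOf (c' i.succ))) := by
      intro i
      constructor
      · exact Subgroup.map_mono (hstep i.succ).1
      · exact map_quot_cyclic f hfs (hnorm _) (hstep i.succ).1 (hstep i.succ).2
    have hmapH := IH (G ⧸ c (Fin.succ 0)) c' h0' hl' hnorm' hstep' (H.map f)
    -- pull back the chain
    obtain ⟨m, d, hd0, hdl, hdstep⟩ := hmapH
    have hsupN : PSubnormal (H ⊔ c (Fin.succ 0)) := by
      refine ⟨m, fun i => (d i).comap f, ?_, ?_, ?_⟩
      · show (d 0).comap f = _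
        rw [hd0, Subgroup.comap_map_eq, QuotientGroup.ker_mk']
      · show (d (Fin.last m)).comap f = ⊤
        rw [hdl, Subgroup.comap_top]
      · intro i
        refine ⟨Subgroup.comap_mono (hdstep i).1, ?_⟩
        have : ((d i.castSucc).comap f).relIndex ((d i.succ).comap f)
            = (d i.castSucc).relIndex (d i.succ) := by
          rw [Subgroup.relIndex_comap, Subgroup.map_comap_eq_self_of_surjective hfs]
        rw [this]
        exact (hdstep i).2
    exact psub_of_sup_cyclic hNcyc H hsupN

theorem stmt_8 {G : Type*} [Group G] [Finite G] (h : IsSupersolvable G)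
    (H : Subgroup G) : PSubnormal H := by
  obtain ⟨n, c, h0, hl, hnorm, hstep⟩ := h
  exact psub_main_aux n G c h0 hl hnorm hstep H
end

section
/- In the alternating group A_5, the subgroup A_4 (the stabilizer of a point) is P-subnormal, but a Sylow 3-subgroup of A_5 is not P-subnormal in A_5. -/
open Equiv Subgroup

section Aux

lemma psub_step_s16 {G : Type*} [Group G] {H : Subgroup G} (h : PSubnormal H) :
    H = ⊤ ∨ ∃ K : Subgroup G, H ≤ K ∧ (H.relIndex K).Prime ∧ PSubnormal K := by
  obtain ⟨n, c, h0, hl, hs⟩ := h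
  cases n with
  | zero => left; rw [← h0, ← hl]; rfl
  | succ m =>
    right
    have e0 : (0 : Fin (m + 1)).castSucc = (0 : Fin (m + 2)) := rfl
    refine ⟨c ((0 : Fin (m+1)).succ), ?_, ?_, m, fun i => c i.succ, rfl, ?_, fun i => ?_⟩
    · have := (hs 0).1; rwa [e0, h0] at this
    · have := (hs 0).2; rwa [e0, h0] at this
    · show c (Fin.last m).succ = ⊤; rw [Fin.succ_last, hl]
    · have := hs i.succ
      rwa [← Fin.succ_castSucc] at this

lemma card_step {G : Type*} [Group G] [Finite G] {H K : Subgroup G} (hle : H ≤ K) :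
    Nat.card K = Nat.card H * H.relIndex K := by
  have h1 := Subgroup.relIndex_mul_index hle
  have h2 := Subgroup.card_mul_index H
  have h3 := Subgroup.card_mul_index K
  have hK : K.index ≠ 0 := Subgroup.index_ne_zero_of_finite
  have key : Nat.card K * K.index = (Nat.card H * H.relIndex K) * K.index := by
    rw [mul_assoc, h1, h2, h3]
  exact Nat.eq_of_mul_eq_mul_right (Nat.pos_of_ne_zero hK) key

lemma normal_of_index_two' {G : Type*} [Group G] (H : Subgroup G) (h : H.index = 2) :
    H.Normal := by
  constructor
  intro n hn g
  have h1 := Subgroup.mul_mem_iff_of_index_two h (a := g * n) (b := g⁻¹)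
  have h2 := Subgroup.mul_mem_iff_of_index_two h (a := g) (b := n)
  rw [mul_assoc] at h1 ⊢
  simp only [inv_mem_iff] at h1
  tauto

lemma le_normalizer_of_subgroupOf_normal {G : Type*} [Group G] {Q K : Subgroup G}
    (hQK : Q ≤ K) (hn : (Q.subgroupOf K).Normal) : K ≤ (Subgroup.normalizer (Q : Set G)) := by
  intro g hg
  rw [Subgroup.mem_normalizer_iff]
  intro x
  constructor
  · intro hx
    have := hn.conj_mem ⟨x, hQK hx⟩ (by simpa [Subgroup.mem_subgroupOf] using hx) ⟨g, hg⟩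
    simpa [Subgroup.mem_subgroupOf] using this
  · intro hx
    have h2 := hn.conj_mem ⟨g * x * g⁻¹, hQK hx⟩
      (by simpa [Subgroup.mem_subgroupOf] using hx) ⟨g, hg⟩⁻¹
    rw [Subgroup.mem_subgroupOf] at h2
    have hxeq : g⁻¹ * (g * x * g⁻¹) * g = x := by group
    simpa [hxeq] using h2

lemma subgroupOf_le_normalizer_subgroupOf {G : Type*} [Group G] {Q K1 K2 : Subgroup G}
    (h : K1 ≤ (Subgroup.normalizer (Q : Set G))) :
    K1.subgroupOf K2 ≤ (Subgroup.normalizer ((Q.subgroupOf K2) : Set K2)) := by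
  intro g hg
  rw [Subgroup.mem_subgroupOf] at hg
  have hgQ := Subgroup.mem_normalizer_iff.mp (h hg)
  rw [Subgroup.mem_normalizer_iff]
  intro x
  simp only [Subgroup.mem_subgroupOf, MulMemClass.coe_mul, InvMemClass.coe_inv]
  exact hgQ ↑x

lemma sylow_card_three {G : Type*} [Group G] [Finite G]
    (h3 : 3 ∣ Nat.card G) (h9 : ¬ (9 ∣ Nat.card G)) (P : Sylow 3 G) :
    Nat.card (P : Subgroup G) = 3 := by
  haveI : Fact (Nat.Prime 3) := ⟨by norm_num⟩
  haveI : (P : Subgroup G).FiniteIndex := Subgroup.finiteIndex_of_finite_quotient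
  obtain ⟨k, hk⟩ := P.2.exists_card_eq
  have hdvd : Nat.card (P : Subgroup G) ∣ Nat.card G := Subgroup.card_subgroup_dvd_card _
  have hmi := Subgroup.card_mul_index (P : Subgroup G)
  have hk1 : k ≤ 1 := by
    by_contra hk1
    have h2 : (3:ℕ)^2 ∣ 3^k := pow_dvd_pow 3 (by omega)
    rw [hk] at hdvd
    exact h9 (by simpa using h2.trans hdvd)
  have hk0 : k ≠ 0 := by
    intro hk0
    subst hk0
    rw [hk, pow_zero, one_mul] at hmi
    exact Sylow.not_dvd_index P (by rw [hmi]; exact h3)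
  interval_cases k
  · simp at hk0
  · rw [hk, pow_one]

lemma eq_sylow_of_card_three {G : Type*} [Group G] [Finite G]
    (h3 : 3 ∣ Nat.card G) (h9 : ¬ (9 ∣ Nat.card G)) {Q : Subgroup G}
    (hQ : Nat.card Q = 3) (P : Sylow 3 G) (hQP : Q ≤ (P : Subgroup G)) :
    Q = P :=
  Subgroup.eq_of_le_of_card_ge hQP (by rw [hQ, sylow_card_three h3 h9 P])

lemma card_A5 : Nat.card (alternatingGroup (Fin 5)) = 60 := by
  have h := two_mul_card_alternatingGroup (α := Fin 5)
  rw [Fintype.card_perm, show Nat.factorial (Fintype.card (Fin 5)) = 120 from by decide] at h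
  rw [Nat.card_eq_fintype_card]
  omega

lemma index_ge_five {H : Subgroup (alternatingGroup (Fin 5))} (h : H ≠ ⊤) : 5 ≤ H.index := by
  have hdvd : (60 : ℕ) ∣ Nat.factorial H.index := by
    rcases (Subgroup.normalCore_normal H).eq_bot_or_eq_top with hb | ht
    · have hker : (MulAction.toPermHom (alternatingGroup (Fin 5))
          ((alternatingGroup (Fin 5)) ⧸ H)).ker = ⊥ := by
        rw [← Subgroup.normalCore_eq_ker, hb]
      have hinj := (MonoidHom.ker_eq_bot_iff _).mp hker
      have hcd := Subgroup.card_dvd_of_injective _ hinj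
      classical
      letI := Fintype.ofFinite ((alternatingGroup (Fin 5)) ⧸ H)
      rwa [card_A5, Nat.card_eq_fintype_card (α := Perm _), Fintype.card_perm,
        ← Nat.card_eq_fintype_card, ← Subgroup.index_eq_card] at hcd
    · exact absurd (top_le_iff.mp (ht ▸ Subgroup.normalCore_le H)) h
  have hne : H.index ≠ 1 := fun h1 => h (Subgroup.index_eq_one.mp h1)
  have h0 : H.index ≠ 0 := Subgroup.index_ne_zero_of_finite
  by_contra hlt
  push_neg at hlt
  interval_cases hi : H.index <;> simp_all <;> norm_num [Nat.factorial] at hdvd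

lemma card_le_twelve {H : Subgroup (alternatingGroup (Fin 5))} (h : H ≠ ⊤) :
    Nat.card H ≤ 12 := by
  have h5 := index_ge_five h
  have hmi := Subgroup.card_mul_index H
  rw [card_A5] at hmi
  nlinarith [Nat.card_pos (α := H)]

lemma norm3 {Q : Subgroup (alternatingGroup (Fin 5))} (hQ : Nat.card Q = 3) :
    Nat.card (Subgroup.normalizer (Q : Set (alternatingGroup (Fin 5)))) = 6 := by
  haveI : Fact (Nat.Prime 3) := ⟨by norm_num⟩
  have h3 : (3:ℕ) ∣ Nat.card (alternatingGroup (Fin 5)) := by rw [card_A5]; norm_num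
  have h9 : ¬ (9:ℕ) ∣ Nat.card (alternatingGroup (Fin 5)) := by rw [card_A5]; norm_num
  obtain ⟨P, hQP⟩ := (IsPGroup.of_card (hQ.trans (pow_one 3).symm)).exists_le_sylow
  have hPQ : Q = P := eq_sylow_of_card_three h3 h9 hQ P hQP
  have hns : Nat.card (Sylow 3 (alternatingGroup (Fin 5))) = (Subgroup.normalizer (Q : Set (alternatingGroup (Fin 5)))).index := by
    rw [Sylow.card_eq_index_normalizer P, hPQ]; rfl
  have hPi : (P : Subgroup (alternatingGroup (Fin 5))).index = 20 := by
    have hmi := Subgroup.card_mul_index (P : Subgroup (alternatingGroup (Fin 5)))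
    rw [card_A5, sylow_card_three h3 h9 P] at hmi
    omega
  have hdvdi : (Subgroup.normalizer (Q : Set (alternatingGroup (Fin 5)))).index ∣ 20 := by
    rw [← hns]
    have := Sylow.card_dvd_index P
    rwa [hPi] at this
  have hmod : (Subgroup.normalizer (Q : Set (alternatingGroup (Fin 5)))).index % 3 = 1 := by
    have := card_sylow_modEq_one 3 (alternatingGroup (Fin 5))
    rw [hns] at this
    simpa [Nat.ModEq] using this
  have hne : (Subgroup.normalizer (Q : Set (alternatingGroup (Fin 5)))) ≠ ⊤ := by
    intro htop
    have hnorm : Q.Normal := Subgroup.normalizer_eq_top_iff.mp htop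
    rcases hnorm.eq_bot_or_eq_top with hb | ht
    · rw [hb, Subgroup.card_bot] at hQ; norm_num at hQ
    · rw [ht, Subgroup.card_top, card_A5] at hQ; norm_num at hQ
  have h5 := index_ge_five hne
  have h20 : (Subgroup.normalizer (Q : Set (alternatingGroup (Fin 5)))).index ≤ 20 := Nat.le_of_dvd (by norm_num) hdvdi
  have hidx : (Subgroup.normalizer (Q : Set (alternatingGroup (Fin 5)))).index = 10 := by
    interval_cases h : (Subgroup.normalizer (Q : Set (alternatingGroup (Fin 5)))).index <;> omega
  have := Subgroup.card_mul_index (Subgroup.normalizer (Q : Set (alternatingGroup (Fin 5))))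
  rw [card_A5, hidx] at this
  omega

lemma no_6_in_12 {K1 K2 : Subgroup (alternatingGroup (Fin 5))} (h12 : K1 ≤ K2)
    (hc1 : Nat.card K1 = 6) (hc2 : Nat.card K2 = 12) : False := by
  haveI : Fact (Nat.Prime 3) := ⟨by norm_num⟩
  letI := Fintype.ofFinite K1
  obtain ⟨g, hg⟩ := exists_prime_orderOf_dvd_card (G := K1) 3
    (by rw [← Nat.card_eq_fintype_card, hc1]; norm_num)
  set Q := Subgroup.zpowers (g : alternatingGroup (Fin 5)) with hQdef
  have hgord : orderOf (g : alternatingGroup (Fin 5)) = 3 := by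
    rw [Subgroup.orderOf_coe, hg]
  have hQcard : Nat.card Q = 3 := by rw [hQdef, Nat.card_zpowers, hgord]
  have hQK1 : Q ≤ K1 := Subgroup.zpowers_le.mpr g.2
  have hQK2 : Q ≤ K2 := hQK1.trans h12
  -- K1 normalizes Q
  have hr1 : Q.relIndex K1 = 2 := by
    have := card_step hQK1; rw [hc1, hQcard] at this; omega
  have hn1 : (Q.subgroupOf K1).Normal := normal_of_index_two' _ hr1
  have hK1N : K1 ≤ (Subgroup.normalizer (Q : Set (alternatingGroup (Fin 5)))) := le_normalizer_of_subgroupOf_normal hQK1 hn1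
  have hNcard : Nat.card (Subgroup.normalizer (Q : Set (alternatingGroup (Fin 5)))) = 6 := norm3 hQcard
  -- Sylow theory inside K2
  have hr2 : Q.relIndex K2 = 4 := by
    have := card_step hQK2; rw [hc2, hQcard] at this; omega
  have hQ2card : Nat.card (Q.subgroupOf K2) = 3 := by
    have hmi := Subgroup.card_mul_index (Q.subgroupOf K2)
    have hidx : (Q.subgroupOf K2).index = 4 := hr2
    rw [hidx, hc2] at hmi
    omega
  have h3' : (3:ℕ) ∣ Nat.card K2 := by rw [hc2]; norm_num
  have h9' : ¬ (9:ℕ) ∣ Nat.card K2 := by rw [hc2]; norm_num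
  obtain ⟨P2, hP2⟩ := (IsPGroup.of_card (hQ2card.trans (pow_one 3).symm)).exists_le_sylow
  have hQ2P2 : Q.subgroupOf K2 = P2 := eq_sylow_of_card_three h3' h9' hQ2card P2 hP2
  -- the normalizer of the Sylow 3 in K2 contains K1, so has index ≤ 2
  have hK1'card : Nat.card (K1.subgroupOf K2) = 6 := by
    have hrr : K1.relIndex K2 = 2 := by
      have := card_step h12; rw [hc1, hc2] at this; omega
    have hmi := Subgroup.card_mul_index (K1.subgroupOf K2)
    have hidx : (K1.subgroupOf K2).index = 2 := hrr
    rw [hidx, hc2] at hmi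
    omega
  have hK1'le : K1.subgroupOf K2 ≤ (Subgroup.normalizer ((Q.subgroupOf K2) : Set K2)) :=
    subgroupOf_le_normalizer_subgroupOf hK1N
  have hNle : 6 ≤ Nat.card ((Subgroup.normalizer ((Q.subgroupOf K2) : Set K2))) := by
    rw [← hK1'card]
    exact Subgroup.card_le_of_le hK1'le
  have hNidx : (Subgroup.normalizer ((Q.subgroupOf K2) : Set K2)).index ≤ 2 := by
    have hmi := Subgroup.card_mul_index ((Subgroup.normalizer ((Q.subgroupOf K2) : Set K2)))
    rw [hc2] at hmi
    nlinarith
  have hmod : (Subgroup.normalizer ((Q.subgroupOf K2) : Set K2)).index % 3 = 1 := by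
    have := card_sylow_modEq_one 3 K2
    rw [Sylow.card_eq_index_normalizer P2] at this
    rw [hQ2P2]; exact this
  have h0 : (Subgroup.normalizer ((Q.subgroupOf K2) : Set K2)).index ≠ 0 := Subgroup.index_ne_zero_of_finite
  have hone : (Subgroup.normalizer ((Q.subgroupOf K2) : Set K2)).index = 1 := by omega
  have htop : (Subgroup.normalizer ((Q.subgroupOf K2) : Set K2)) = ⊤ := Subgroup.index_eq_one.mp hone
  have hnormal : (Q.subgroupOf K2).Normal := Subgroup.normalizer_eq_top_iff.mp htop
  have hK2N : K2 ≤ (Subgroup.normalizer (Q : Set (alternatingGroup (Fin 5)))) := le_normalizer_of_subgroupOf_normal hQK2 hnormal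
  have := Subgroup.card_le_of_le hK2N
  rw [hc2, hNcard] at this
  omega

end Aux

theorem stmt_16 :
    PSubnormal (MulAction.stabilizer (alternatingGroup (Fin 5)) (4 : Fin 5)) ∧
      ∀ P : Sylow 3 (alternatingGroup (Fin 5)),
        ¬ PSubnormal (P : Subgroup (alternatingGroup (Fin 5))) := by
  constructor
  · -- the stabilizer has index 5
    haveI : MulAction.IsPretransitive (alternatingGroup (Fin 5)) (Fin 5) := by
      constructor
      intro a b
      revert a b
      decide
    have hidx : (MulAction.stabilizer (alternatingGroup (Fin 5)) (4 : Fin 5)).index = 5 := by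
      rw [MulAction.index_stabilizer_of_transitive]
      simp [Nat.card_eq_fintype_card]
    refine ⟨1, ![MulAction.stabilizer (alternatingGroup (Fin 5)) (4 : Fin 5), ⊤], rfl, rfl,
      fun i => ?_⟩
    fin_cases i
    constructor
    · exact le_top
    · show Nat.Prime ((MulAction.stabilizer (alternatingGroup (Fin 5)) (4 : Fin 5)).relIndex ⊤)
      rw [Subgroup.relIndex_top_right, hidx]
      norm_num
  · intro P hPS
    have h3 : (3:ℕ) ∣ Nat.card (alternatingGroup (Fin 5)) := by rw [card_A5]; norm_num
    have h9 : ¬ (9:ℕ) ∣ Nat.card (alternatingGroup (Fin 5)) := by rw [card_A5]; norm_num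
    have hPc : Nat.card (P : Subgroup (alternatingGroup (Fin 5))) = 3 :=
      sylow_card_three h3 h9 P
    -- step 1
    rcases psub_step_s16 hPS with htop | ⟨K1, hle1, hp1, hPS1⟩
    · rw [htop, Subgroup.card_top, card_A5] at hPc; norm_num at hPc
    have hK1card : Nat.card K1 = 3 * (P : Subgroup (alternatingGroup (Fin 5))).relIndex K1 := by
      have := card_step hle1; rwa [hPc] at this
    have hK1dvd : Nat.card K1 ∣ 60 := card_A5 ▸ Subgroup.card_subgroup_dvd_card K1
    set p := (P : Subgroup (alternatingGroup (Fin 5))).relIndex K1 with hpdef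
    have hp20 : p ∣ 20 := by
      have : (3:ℕ) * p ∣ 3 * 20 := by rw [← hK1card]; simpa using hK1dvd
      exact (mul_dvd_mul_iff_left (by norm_num : (3:ℕ) ≠ 0)).mp this
    have hp25 : p = 2 ∨ p = 5 := by
      have hle20 : p ≤ 20 := Nat.le_of_dvd (by norm_num) hp20
      have h2 : 2 ≤ p := hp1.two_le
      interval_cases p <;> revert hp1 hp20 <;> decide
    rcases hp25 with hp2 | hp5
    · -- |K1| = 6
      have hc1 : Nat.card K1 = 6 := by rw [hK1card, hp2]
      rcases psub_step_s16 hPS1 with htop1 | ⟨K2, hle2, hq1, _⟩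
      · rw [htop1, Subgroup.card_top, card_A5] at hc1; norm_num at hc1
      have hK2card : Nat.card K2 = 6 * K1.relIndex K2 := by
        have := card_step hle2; rwa [hc1] at this
      have hK2dvd : Nat.card K2 ∣ 60 := card_A5 ▸ Subgroup.card_subgroup_dvd_card K2
      set q := K1.relIndex K2 with hqdef
      have hq10 : q ∣ 10 := by
        have : (6:ℕ) * q ∣ 6 * 10 := by rw [← hK2card]; simpa using hK2dvd
        exact (mul_dvd_mul_iff_left (by norm_num : (6:ℕ) ≠ 0)).mp this
      have hq25 : q = 2 ∨ q = 5 := by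
        have hle10 : q ≤ 10 := Nat.le_of_dvd (by norm_num) hq10
        have h2 : 2 ≤ q := hq1.two_le
        interval_cases q <;> revert hq1 hq10 <;> decide
      rcases hq25 with hq2 | hq5
      · exact no_6_in_12 hle2 hc1 (by rw [hK2card, hq2])
      · -- |K2| = 30: impossible, proper subgroups have order ≤ 12
        have hc2 : Nat.card K2 = 30 := by rw [hK2card, hq5]
        have hne : K2 ≠ ⊤ := by
          intro ht; rw [ht, Subgroup.card_top, card_A5] at hc2; norm_num at hc2
        have := card_le_twelve hne
        omega
    · -- |K1| = 15: impossible
      have hc1 : Nat.card K1 = 15 := by rw [hK1card, hp5]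
      have hne : K1 ≠ ⊤ := by
        intro ht; rw [ht, Subgroup.card_top, card_A5] at hc1; norm_num at hc1
      have := card_le_twelve hne
      omega
end

section
/- Let a and n be integers greater than 1 such that it is not the case that (n = 2 and a = 2^b − 1 for some b) and not the case that (n = 6 and a = 2). Then there exists a prime q such that q divides a^n − 1, q does not divide a^i − 1 for any 0 < i < n, and q does not divide n (Zsygmondy's theorem variant). -/
open Polynomial Finset


lemma zsyg_bad_prime (a n q : ℕ) (hn : 0 < n) (hq : q.Prime)
    (hqc : (q : ℤ) ∣ (cyclotomic n ℤ).eval (a : ℤ)) :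
    IsPrimitiveRoot (a : ZMod q) ((n / q ^ n.factorization q)) ∧ (n / q ^ n.factorization q) ∣ q - 1 := by
  haveI : Fact q.Prime := ⟨hq⟩
  haveI : NeZero (((n / q ^ n.factorization q) : ℕ) : ZMod q) := ⟨by
    rw [Ne, ZMod.natCast_eq_zero_iff]
    exact Nat.not_dvd_ordCompl hq hn.ne'⟩
  have hroot : (cyclotomic n (ZMod q)).IsRoot (a : ZMod q) := by
    have h0 : (((cyclotomic n ℤ).eval (a : ℤ) : ℤ) : ZMod q) = 0 := by
      obtain ⟨c, hc⟩ := hqc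
      rw [hc]; push_cast [ZMod.natCast_self]; ring
    rw [IsRoot.def, show (a : ZMod q) = (Int.castRingHom (ZMod q)) (a : ℤ) from by
      simp, cyclotomic.eval_apply]
    exact_mod_cast h0
  rw [show n = q ^ n.factorization q * ((n / q ^ n.factorization q)) from
    (Nat.ordProj_mul_ordCompl_eq_self n q).symm] at hroot
  have hprim : IsPrimitiveRoot (a : ZMod q) ((n / q ^ n.factorization q)) :=
    (isRoot_cyclotomic_prime_pow_mul_iff_of_charP).mp hroot
  refine ⟨hprim, ?_⟩
  have hmpos : 0 < (n / q ^ n.factorization q) := Nat.ordCompl_pos q hn.ne'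
  have hane : (a : ZMod q) ≠ 0 := by
    intro h
    have := hprim.pow_eq_one
    rw [h, zero_pow hmpos.ne'] at this
    exact zero_ne_one this
  have := ZMod.orderOf_dvd_card_sub_one hane
  rwa [← hprim.eq_orderOf] at this


lemma zsyg_one_add_pow {R : Type*} [CommRing R] {x : R} (hx : x ^ 2 = 0) :
    ∀ i : ℕ, (1 + x) ^ i = 1 + (i : R) * x := by
  intro i
  induction i with
  | zero => simp
  | succ i ih =>
    rw [pow_succ, ih]
    have h2 : (1 + (i:R) * x) * (1 + x) = 1 + ((i:R)+1) * x + (i:R) * x ^ 2 := by ring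
    rw [h2, hx]
    push_cast
    ring

lemma zsyg_dvd_geom (a n q : ℕ) (ha : 1 < a) (hn : 0 < n) (hq : q.Prime) (hqn : q ∣ n) :
    (cyclotomic n ℤ).eval (a : ℤ) ∣ ∑ i ∈ Finset.range q, ((a : ℤ) ^ (n / q)) ^ i := by
  set M := n / q with hM
  have hMdvd : M ∣ n := Nat.div_dvd_of_dvd hqn
  have hMpos : 0 < M := Nat.div_pos (Nat.le_of_dvd hn hqn) hq.pos
  have hMlt : M < n := Nat.div_lt_self hn hq.one_lt
  set R := ∏ d ∈ n.divisors \ M.divisors, cyclotomic d ℤ with hR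
  have hsub : M.divisors ⊆ n.divisors := Nat.divisors_subset_of_dvd hn.ne' hMdvd
  have hprod : (X ^ M - 1) * R = X ^ n - (1 : ℤ[X]) := by
    rw [← prod_cyclotomic_eq_X_pow_sub_one hMpos, ← prod_cyclotomic_eq_X_pow_sub_one hn, hR, mul_comm]
    exact Finset.prod_sdiff hsub
  have hcycdvd : cyclotomic n ℤ ∣ R := by
    apply Finset.dvd_prod_of_mem
    rw [Finset.mem_sdiff]
    refine ⟨Nat.mem_divisors_self n hn.ne', fun hmem => ?_⟩
    exact absurd (Nat.le_of_dvd hMpos (Nat.mem_divisors.mp hmem).1) (by omega)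
  have heval : ((a : ℤ) ^ M - 1) * R.eval (a : ℤ) = (a : ℤ) ^ n - 1 := by
    have := congrArg (eval (a : ℤ)) hprod
    simpa using this
  have hgeom : (∑ i ∈ Finset.range q, ((a : ℤ) ^ M) ^ i) * ((a : ℤ) ^ M - 1)
      = (a : ℤ) ^ n - 1 := by
    rw [geom_sum_mul, ← pow_mul, Nat.div_mul_cancel hqn]
  have hbne : (a : ℤ) ^ M - 1 ≠ 0 := by
    have : (1 : ℤ) < (a : ℤ) ^ M := one_lt_pow₀ (by exact_mod_cast ha) hMpos.ne'
    omega
  have : R.eval (a : ℤ) = ∑ i ∈ Finset.range q, ((a : ℤ) ^ M) ^ i := by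
    apply mul_left_cancel₀ hbne
    rw [heval, mul_comm ((a:ℤ)^M - 1), hgeom]
  rw [← this]
  exact eval_dvd hcycdvd


lemma zsyg_good (a n q : ℕ) (ha : 1 < a) (hn : 1 < n) (hq : q.Prime)
    (hqc : (q : ℤ) ∣ (cyclotomic n ℤ).eval (a : ℤ)) (hqn : ¬ q ∣ n) :
    q ∣ a ^ n - 1 ∧ (∀ i : ℕ, 0 < i → i < n → ¬ q ∣ a ^ i - 1) ∧ ¬ q ∣ n := by
  haveI : Fact q.Prime := ⟨hq⟩
  haveI : NeZero (n : ZMod q) := ⟨by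
    rw [Ne, ZMod.natCast_eq_zero_iff]; exact hqn⟩
  have hroot : (cyclotomic n (ZMod q)).IsRoot (a : ZMod q) := by
    have h0 : (((cyclotomic n ℤ).eval (a : ℤ) : ℤ) : ZMod q) = 0 := by
      obtain ⟨c, hc⟩ := hqc
      rw [hc]; push_cast [ZMod.natCast_self]; ring
    rw [IsRoot.def, show (a : ZMod q) = (Int.castRingHom (ZMod q)) (a : ℤ) from by
      simp, cyclotomic.eval_apply]
    exact_mod_cast h0
  have hprim : IsPrimitiveRoot (a : ZMod q) n := (isRoot_cyclotomic_iff).mp hroot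
  have hdvd : ∀ i : ℕ, 0 < i → (q ∣ a ^ i - 1 ↔ (a : ZMod q) ^ i = 1) := by
    intro i hi
    rw [← ZMod.natCast_eq_zero_iff, Nat.cast_sub (Nat.one_le_pow _ _ (by omega)),
      sub_eq_zero]
    push_cast
    exact Iff.rfl
  refine ⟨(hdvd n (by omega)).mpr hprim.pow_eq_one, fun i hi hin hqi => ?_, hqn⟩
  have := Nat.le_of_dvd hi (hprim.dvd_of_pow_eq_one i ((hdvd i hi).mp hqi))
  omega
lemma zsyg_sq_not_dvd (a n q : ℕ) (ha : 1 < a) (hn : 2 < n) (hq : q.Prime) (hqn : q ∣ n)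
    (hqc : (q : ℤ) ∣ (cyclotomic n ℤ).eval (a : ℤ)) :
    ¬ ((q : ℤ) ^ 2 ∣ (cyclotomic n ℤ).eval (a : ℤ)) := by
  intro hsq
  haveI : Fact q.Prime := ⟨hq⟩
  obtain ⟨hprim, hmdvd⟩ := zsyg_bad_prime a n q (by omega) hq hqc
  set m := n / q ^ n.factorization q with hm
  have hmpos : 0 < m := Nat.ordCompl_pos q (by omega)
  have hkpos : 0 < n.factorization q := hq.factorization_pos_of_dvd (by omega) hqn
  -- q ∣ a^m - 1
  have hm1 : (q : ℤ) ∣ (a : ℤ) ^ m - 1 := by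
    have := hprim.pow_eq_one
    rw [← ZMod.intCast_zmod_eq_zero_iff_dvd]
    push_cast
    rw [sub_eq_zero]
    exact_mod_cast this
  -- m ∣ n / q
  have hmM : m ∣ n / q := by
    rw [Nat.dvd_div_iff_mul_dvd hqn]
    calc q * m ∣ q ^ n.factorization q * m := by
          exact mul_dvd_mul_right (dvd_pow_self q hkpos.ne') m
    _ = n := Nat.ordProj_mul_ordCompl_eq_self n q
  set b := (a : ℤ) ^ (n / q) with hb
  have hbm1 : (q : ℤ) ∣ b - 1 := by
    obtain ⟨t, ht⟩ := hmM
    refine hm1.trans ?_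
    rw [hb, ht, pow_mul]
    simpa using sub_dvd_pow_sub_pow ((a:ℤ)^m) 1 t
  have hSdvd : (q : ℤ) ^ 2 ∣ ∑ i ∈ Finset.range q, b ^ i :=
    hsq.trans (zsyg_dvd_geom a n q ha (by omega) hq hqn)
  by_cases hq2 : q = 2
  · -- q = 2 : n = 2^k, b ≡ 1 mod 4, S = 1 + b ≡ 2 mod 4
    subst hq2
    have hm1' : m = 1 := Nat.eq_one_of_dvd_one (by simpa using hmdvd)
    have hn2 : n = 2 ^ n.factorization 2 := by
      have := Nat.ordProj_mul_ordCompl_eq_self n 2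
      rw [← hm, hm1', mul_one] at this
      omega
    have hk2 : 2 ≤ n.factorization 2 := by
      by_contra h
      interval_cases h' : n.factorization 2 <;> omega
    have haodd : Odd (a : ℤ) := by
      rw [hm1', pow_one] at hm1
      obtain ⟨c, hc⟩ := hm1
      exact ⟨c, by omega⟩
    have hMeven : 2 ∣ n / 2 := by
      have hdiv : (2:ℕ) ^ n.factorization 2 / 2 ^ 1 = 2 ^ (n.factorization 2 - 1) :=
        Nat.pow_div (by omega) (by omega)
      rw [pow_one] at hdiv
      rw [hn2, hdiv]
      exact dvd_pow_self 2 (by omega)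
    obtain ⟨M2, hM2⟩ := hMeven
    have hbsq : b = ((a : ℤ) ^ M2) ^ 2 := by rw [hb, hM2, mul_comm 2 M2, pow_mul]
    have hbmod : b % 4 = 1 := by
      rw [hbsq]; exact Int.sq_mod_four_eq_one_of_odd (haodd.pow)
    have hS : ∑ i ∈ Finset.range 2, b ^ i = 1 + b := by
      rw [Finset.sum_range_succ, Finset.sum_range_one]; ring
    rw [hS] at hSdvd
    norm_num at hSdvd
    omega
  · -- q odd
    have hqodd : Odd q := hq.odd_of_ne_two hq2
    obtain ⟨e, he⟩ := hbm1
    -- work in ZMod (q^2)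
    set f := Int.castRingHom (ZMod (q ^ 2)) with hf
    have hcast0 : (f (∑ i ∈ Finset.range q, b ^ i)) = 0 := by
      obtain ⟨c, hc⟩ := hSdvd
      have hq0 : ((q : ZMod (q^2)))^2 = 0 := by rw [← Nat.cast_pow, ZMod.natCast_self]
      rw [hc, map_mul, map_pow, show f (q:ℤ) = (q : ZMod (q^2)) from by simp [hf], hq0,
        zero_mul]
    set x : ZMod (q ^ 2) := f ((q : ℤ) * e) with hx
    have hx2 : x ^ 2 = 0 := by
      have hq0 : ((q : ZMod (q^2)))^2 = 0 := by rw [← Nat.cast_pow, ZMod.natCast_self]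
      rw [hx, ← map_pow, show ((q:ℤ)*e)^2 = (q:ℤ)^2 * e^2 by ring, map_mul, map_pow,
        show f (q:ℤ) = (q : ZMod (q^2)) from by simp [hf], hq0, zero_mul]
    have hfb : f b = 1 + x := by
      rw [hx, show b = 1 + (q:ℤ)*e by omega]
      simp [hf]
    have hsum : f (∑ i ∈ Finset.range q, b ^ i) = (q : ZMod (q ^ 2)) +
        (∑ i ∈ Finset.range q, (i : ZMod (q ^ 2))) * x := by
      rw [map_sum]
      have : ∀ i ∈ Finset.range q, f (b ^ i) = 1 + (i : ZMod (q^2)) * x := by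
        intro i _
        rw [map_pow, hfb, zsyg_one_add_pow hx2]
      rw [Finset.sum_congr rfl this, Finset.sum_add_distrib, Finset.sum_const,
        Finset.card_range, Finset.sum_mul]
      simp
    -- the sum term vanishes: q^2 ∣ (∑ i) * q
    have hgauss : (q : ℕ) ^ 2 ∣ (∑ i ∈ Finset.range q, i) * q := by
      have h2 : ((∑ i ∈ Finset.range q, i) * q) * 2 = q ^ 2 * (q - 1) := by
        have := Finset.sum_range_id_mul_two q
        calc (∑ i ∈ Finset.range q, i) * q * 2
            = ((∑ i ∈ Finset.range q, i) * 2) * q := by ring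
          _ = q * (q - 1) * q := by rw [this]
          _ = q ^ 2 * (q - 1) := by ring
      have hcop : Nat.Coprime (q ^ 2) 2 := by
        apply Nat.Coprime.pow_left
        refine (Nat.coprime_comm.mp (Nat.prime_two.coprime_iff_not_dvd.mpr ?_))
        obtain ⟨c, hc⟩ := hqodd
        omega
      exact hcop.dvd_of_dvd_mul_right (h2 ▸ Dvd.intro (q - 1) rfl)
    have hterm : (∑ i ∈ Finset.range q, (i : ZMod (q ^ 2))) * x = 0 := by
      rw [hx]
      have : (∑ i ∈ Finset.range q, (i : ZMod (q ^ 2))) = f (∑ i ∈ Finset.range q, (i:ℤ)) := by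
        rw [map_sum]; simp [hf]
      rw [this, ← map_mul]
      have : (∑ i ∈ Finset.range q, (i:ℤ)) * ((q:ℤ) * e) = ((∑ i ∈ Finset.range q, i) * q : ℕ) * e := by
        push_cast; ring
      rw [this]
      obtain ⟨c, hc⟩ := hgauss
      rw [hc, map_mul]
      have h0 : f ((q ^ 2 * c : ℕ) : ℤ) = 0 := by
        simp only [hf, Int.coe_castRingHom]
        rw [show (((q ^ 2 * c : ℕ) : ℤ) : ZMod (q^2)) = ((q^2*c : ℕ) : ZMod (q^2)) from by
          push_cast; ring, ZMod.natCast_eq_zero_iff]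
        exact Dvd.intro c rfl
      rw [h0, zero_mul]
    rw [hsum, hterm, add_zero] at hcast0
    -- q ≡ 0 mod q^2 is absurd
    have : (q^2 : ℕ) ∣ q := by
      have : ((q : ℕ) : ZMod (q^2)) = 0 := hcast0
      rwa [ZMod.natCast_eq_zero_iff] at this
    have := Nat.le_of_dvd hq.pos this
    nlinarith [hq.two_le]
-- uniqueness of bad prime
lemma zsyg_unique (a n : ℕ) (hn : 1 < n)
    {q r : ℕ} (hq : q.Prime) (hr : r.Prime)
    (hqc : (q : ℤ) ∣ (cyclotomic n ℤ).eval (a : ℤ))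
    (hrc : (r : ℤ) ∣ (cyclotomic n ℤ).eval (a : ℤ))
    (hqn : q ∣ n) (hrn : r ∣ n) : q = r := by
  by_contra hne
  have key : ∀ s t : ℕ, s.Prime → t.Prime →
      (s : ℤ) ∣ (cyclotomic n ℤ).eval (a : ℤ) → s ∣ n → t ∣ n → s ≠ t → t < s := by
    intro s t hs ht hsc hsn htn hst
    obtain ⟨_, hmdvd⟩ := zsyg_bad_prime a n s (by omega) hs hsc
    have htm : t ∣ n / s ^ n.factorization s := by
      have : t ∣ s ^ n.factorization s * (n / s ^ n.factorization s) := by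
        rw [Nat.ordProj_mul_ordCompl_eq_self]; exact htn
      rcases (Nat.Prime.dvd_mul ht).mp this with h | h
      · exact absurd ((Nat.prime_dvd_prime_iff_eq ht hs).mp (ht.dvd_of_dvd_pow h)) (Ne.symm hst)
      · exact h
    have h1 : t ≤ n / s ^ n.factorization s :=
      Nat.le_of_dvd (Nat.ordCompl_pos s (by omega)) htm
    have h2 : n / s ^ n.factorization s ≤ s - 1 := by
      apply Nat.le_of_dvd _ hmdvd
      have := hs.two_le; omega
    have := hs.two_le; omega
  have h1 := key q r hq hr hqc hqn hrn hne
  have h2 := key r q hr hq hrc hrn hqn (Ne.symm hne)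
  omega

lemma zsyg_pow_bound : ∀ k : ℕ, 5 ≤ k → 3 * k + 1 < 2 ^ k := by
  intro k hk
  induction k with
  | zero => omega
  | succ k ih =>
    rcases Nat.lt_or_ge k 5 with h | h
    · interval_cases k <;> simp_all <;> omega
    · have := ih (by omega)
      have : 2 ^ k ≥ 6 := by
        calc 2 ^ k ≥ 2 ^ 5 := Nat.pow_le_pow_right (by omega) (by omega)
        _ ≥ 6 := by norm_num
      rw [pow_succ]
      omega
lemma zsyg_expand (q m : ℕ) (hq : q.Prime) : ∀ j : ℕ,
    cyclotomic (q ^ (j + 1) * m) ℤ = Polynomial.expand ℤ (q ^ j) (cyclotomic (q * m) ℤ) := by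
  intro j
  induction j with
  | zero => simp
  | succ j ih =>
    have hdvd : q ∣ q ^ (j + 1) * m := Dvd.dvd.mul_right (dvd_pow_self q (by omega)) m
    have h1 := cyclotomic_expand_eq_cyclotomic hq hdvd ℤ
    have h2 : q ^ (j + 1) * m * q = q ^ (j + 2) * m := by ring
    rw [h2] at h1
    rw [← h1, ih, Polynomial.expand_expand]
    congr 1
    ring

theorem stmt_17 (a n : ℕ) (ha : 1 < a) (hn : 1 < n)
    (h1 : ¬ (n = 2 ∧ ∃ b : ℕ, a = 2 ^ b - 1))
    (h2 : ¬ (n = 6 ∧ a = 2)) :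
    ∃ q : ℕ, q.Prime ∧ q ∣ a ^ n - 1 ∧
      (∀ i : ℕ, 0 < i → i < n → ¬ q ∣ a ^ i - 1) ∧ ¬ q ∣ n := by
  set e : ℤ := (cyclotomic n ℤ).eval (a : ℤ) with he
  set C : ℕ := e.natAbs with hC
  -- C > 1
  have hClt : a - 1 < C := sub_one_lt_natAbs_cyclotomic_eval hn (by omega)
  have hC1 : 1 < C := by omega
  -- every prime of C that doesn't divide n gives the conclusion
  by_cases hgood : ∃ q : ℕ, q.Prime ∧ (q : ℤ) ∣ e ∧ ¬ q ∣ n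
  · obtain ⟨q, hq, hqe, hqn⟩ := hgood
    exact ⟨q, hq, zsyg_good a n q ha hn hq hqe hqn⟩
  push_neg at hgood
  exfalso
  have hall : ∀ r : ℕ, r.Prime → r ∣ C → r ∣ n := by
    intro r hr hrC
    exact hgood r hr ((Int.natCast_dvd_natCast.mpr hrC).trans (Int.natAbs_dvd.mpr dvd_rfl))
  -- n = 2 case : Mersenne
  rcases eq_or_lt_of_le (show 2 ≤ n from hn) with hn2 | hn3
  · -- n = 2
    have hCeq : C = a + 1 := by
      rw [hC, he, ← hn2, cyclotomic_two]
      simp only [eval_add, eval_X, eval_one]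
      rw [show ((a:ℤ) + 1) = ((a + 1 : ℕ) : ℤ) by push_cast; ring, Int.natAbs_natCast]
    have : C = 2 ^ C.primeFactorsList.length :=
      Nat.eq_prime_pow_of_unique_prime_dvd (by omega) (fun {d} hd hdC => by
        have := hall d hd hdC
        rcases (Nat.prime_dvd_prime_iff_eq hd Nat.prime_two).mp (by rwa [← hn2] at this) with h
        exact h)
    exact h1 ⟨hn2.symm, C.primeFactorsList.length, by omega⟩
  -- now n ≥ 3
  set q : ℕ := C.minFac with hq
  have hqprime : q.Prime := Nat.minFac_prime (by omega)
  have hqC : q ∣ C := Nat.minFac_dvd C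
  have hqe : (q : ℤ) ∣ e := (Int.natCast_dvd_natCast.mpr hqC).trans (Int.natAbs_dvd.mpr dvd_rfl)
  have hqn : q ∣ n := hall q hqprime hqC
  -- C is a power of q
  have hCpow : C = q ^ C.primeFactorsList.length :=
    Nat.eq_prime_pow_of_unique_prime_dvd (by omega) (fun {d} hd hdC => by
      have hde : (d : ℤ) ∣ e := (Int.natCast_dvd_natCast.mpr hdC).trans (Int.natAbs_dvd.mpr dvd_rfl)
      exact zsyg_unique a n hn hd hqprime hde hqe (hall d hd hdC) hqn)
  -- C = q since q^2 does not divide e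
  have hsqnot : ¬ ((q : ℤ) ^ 2 ∣ e) := zsyg_sq_not_dvd a n q ha hn3 hqprime hqn hqe
  have hCq : C = q := by
    rcases Nat.lt_or_ge C.primeFactorsList.length 2 with hl | hl
    · interval_cases h : C.primeFactorsList.length
      · rw [hCpow] at hC1; simp at hC1
      · simpa using hCpow
    · exfalso
      apply hsqnot
      have : q ^ 2 ∣ C := hCpow ▸ pow_dvd_pow q hl
      calc (q : ℤ) ^ 2 = ((q ^ 2 : ℕ) : ℤ) := by push_cast; ring
        _ ∣ (C : ℤ) := Int.natCast_dvd_natCast.mpr this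
        _ ∣ e := Int.natAbs_dvd.mpr dvd_rfl
  -- C divides a^n - 1
  have hCdvd : C ∣ a ^ n - 1 := by
    have hd : e ∣ (a : ℤ) ^ n - 1 := by
      have := cyclotomic.dvd_X_pow_sub_one n ℤ
      have h' := eval_dvd (x := (a : ℤ)) this
      simpa [he] using h'
    have hcast : (((a ^ n - 1 : ℕ) : ℤ)) = (a : ℤ) ^ n - 1 := by
      push_cast [Nat.one_le_pow n a (by omega)]
      ring
    have h' := Int.natAbs_dvd_natAbs.mpr hd
    rw [← hC, ← hcast, Int.natAbs_natCast] at h'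
    exact h'
  rcases Nat.lt_or_ge a 3 with ha2 | ha3
  · -- a = 2 case
    have ha2' : a = 2 := by omega
    subst ha2'
    -- q is odd
    have hq2 : q ≠ 2 := by
      intro h
      have h2d : 2 ∣ 2 ^ n - 1 := by
        have hqd : q ∣ 2 ^ n - 1 := hqC.trans hCdvd
        rwa [h] at hqd
      have : 2 ∣ 2 ^ n := dvd_pow_self 2 (by omega)
      have : 1 ≤ 2 ^ n := Nat.one_le_two_pow
      omega
    obtain ⟨hprim, hmdvd⟩ := zsyg_bad_prime 2 n q (by omega) hqprime hqe
    set m : ℕ := n / q ^ n.factorization q with hm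
    set k : ℕ := n.factorization q with hk
    have hk1 : 1 ≤ k := hqprime.factorization_pos_of_dvd (by omega) hqn
    have hneq : q ^ k * m = n := Nat.ordProj_mul_ordCompl_eq_self n q
    have hmpos : 0 < m := Nat.ordCompl_pos q (by omega)
    have hm2 : 2 ≤ m := by
      rcases Nat.lt_or_ge m 2 with h | h
      · exfalso
        have hm1 : m = 1 := by omega
        have h21 : ((2 : ℕ) : ZMod q) = 1 := by
          have := hprim.pow_eq_one
          rwa [hm1, pow_one] at this
        have h0 : ((1 : ℕ) : ZMod q) = 0 := by
          have hz : ((2 : ℕ) : ZMod q) - 1 = 0 := by rw [h21]; ring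
          calc ((1 : ℕ) : ZMod q) = ((2 : ℕ) : ZMod q) - 1 := by push_cast; ring
            _ = 0 := hz
        rw [ZMod.natCast_eq_zero_iff] at h0
        have := Nat.le_of_dvd one_pos h0
        have := hqprime.two_le
        omega
      · exact h
    have hmq : m ≤ q - 1 := Nat.le_of_dvd (by have := hqprime.two_le; omega) hmdvd
    rcases Nat.lt_or_ge k 2 with hk2 | hk2
    · -- k = 1 : n = q * m
      have hk1' : k = 1 := by omega
      have hnqm : n = m * q := by rw [← hneq, hk1']; ring
      have hqm : ¬ q ∣ m := by
        intro h
        have := Nat.le_of_dvd hmpos h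
        omega
      have hid := cyclotomic_expand_eq_cyclotomic_mul hqprime hqm ℤ
      have hev : (cyclotomic m ℤ).eval ((2 : ℤ) ^ q)
          = (cyclotomic (m * q) ℤ).eval 2 * (cyclotomic m ℤ).eval 2 := by
        have := congrArg (eval (2 : ℤ)) hid
        simpa [expand_eval] using this
      set B : ℕ := ((cyclotomic m ℤ).eval 2).natAbs with hB
      have he2 : e = (cyclotomic n ℤ).eval (2 : ℤ) := by rw [he]; norm_cast
      have hA : ((cyclotomic m ℤ).eval ((2 : ℤ) ^ q)).natAbs = q * B := by
        rw [hev, Int.natAbs_mul, ← hnqm, ← he2, ← hC, hCq]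
      -- real bounds
      have hpos1 : (0 : ℤ) < (cyclotomic m ℤ).eval ((2 : ℤ) ^ q) :=
        cyclotomic_pos' m (one_lt_pow₀ (by norm_num) (by have := hqprime.two_le; omega))
      have hpos2 : (0 : ℤ) < (cyclotomic m ℤ).eval 2 := cyclotomic_pos' m (by norm_num)
      have hreal1 : ((((cyclotomic m ℤ).eval ((2 : ℤ) ^ q)) : ℤ) : ℝ)
          = (cyclotomic m ℝ).eval ((2 : ℝ) ^ q) := by
        rw [show ((2 : ℝ) ^ q) = (Int.castRingHom ℝ) ((2 : ℤ) ^ q) from by simp,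
          cyclotomic.eval_apply]
        simp
      have hreal2 : ((((cyclotomic m ℤ).eval 2) : ℤ) : ℝ) = (cyclotomic m ℝ).eval 2 := by
        rw [show ((2 : ℝ)) = (Int.castRingHom ℝ) (2 : ℤ) from by simp,
          cyclotomic.eval_apply]
        simp
      have hub : (cyclotomic m ℝ).eval 2 ≤ (2 + 1) ^ m.totient :=
        cyclotomic_eval_le_add_one_pow_totient (by norm_num) m
      have hlb : ((2 : ℝ) ^ q - 1) ^ m.totient ≤ (cyclotomic m ℝ).eval ((2 : ℝ) ^ q) :=
        sub_one_pow_totient_le_cyclotomic_eval (one_lt_pow₀ (by norm_num)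
          (by have := hqprime.two_le; omega)) m
      -- combine into ℕ inequality
      have hAZ : ((q * B : ℕ) : ℤ) = (cyclotomic m ℤ).eval ((2 : ℤ) ^ q) := by
        rw [← hA, Int.natAbs_of_nonneg hpos1.le]
      have hBZ : ((B : ℕ) : ℤ) = (cyclotomic m ℤ).eval 2 := by
        rw [hB, Int.natAbs_of_nonneg hpos2.le]
      have hnat : (2 ^ q - 1) ^ m.totient ≤ q * 3 ^ m.totient := by
        have h2q1 : 1 ≤ 2 ^ q := Nat.one_le_two_pow
        have hBle : (B : ℝ) ≤ (3 : ℝ) ^ m.totient := by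
          have h' : (((cyclotomic m ℤ).eval 2 : ℤ) : ℝ) ≤ (2 + 1) ^ m.totient := by
            rw [hreal2]; exact hub
          rw [← hBZ] at h'
          push_cast at h'
          norm_num at h' ⊢
          exact h'
        have key : ((2 : ℝ) ^ q - 1) ^ m.totient ≤ (q : ℝ) * 3 ^ m.totient := by
          calc ((2 : ℝ) ^ q - 1) ^ m.totient ≤ (cyclotomic m ℝ).eval ((2 : ℝ) ^ q) := hlb
            _ = (((cyclotomic m ℤ).eval ((2 : ℤ) ^ q) : ℤ) : ℝ) := hreal1.symm
            _ = ((q * B : ℕ) : ℝ) := by rw [← hAZ]; push_cast; ring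
            _ = (q : ℝ) * (B : ℝ) := by push_cast; ring
            _ ≤ (q : ℝ) * 3 ^ m.totient :=
                mul_le_mul_of_nonneg_left hBle (by positivity)
        have hcast1 : (((2 ^ q - 1 : ℕ) : ℝ)) = (2 : ℝ) ^ q - 1 := by
          push_cast [h2q1]
          ring
        rw [← hcast1] at key
        exact_mod_cast key
      -- q must be 3
      have hq3 : q = 3 := by
        by_contra hq3
        have hq5 : 5 ≤ q := by
          rcases Nat.lt_or_ge q 5 with h | h
          · exfalso
            have h2 := hqprime.two_le
            interval_cases q
            · exact hq2 rfl
            · exact hq3 rfl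
            · exact absurd hqprime (by norm_num)
          · exact h
        have hbig : 3 * q + 1 < 2 ^ q := zsyg_pow_bound q hq5
        set t := m.totient with ht
        have htpos : 0 < t := Nat.totient_pos.mpr hmpos
        have c1 : (3 * q + 1) ^ t ≤ (2 ^ q - 1) ^ t :=
          Nat.pow_le_pow_left (by omega) t
        have c2 : q * 3 ^ t < (3 * q + 1) ^ t := by
          calc q * 3 ^ t ≤ q ^ t * 3 ^ t := by
                have : q ≤ q ^ t := Nat.le_self_pow htpos.ne' q
                exact Nat.mul_le_mul_right _ this
            _ = (3 * q) ^ t := by rw [mul_comm 3 q, mul_pow]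
            _ < (3 * q + 1) ^ t := Nat.pow_lt_pow_left (by omega) htpos.ne'
        omega
      -- then m = 2, n = 6, contradiction with h2
      have hm2' : m = 2 := by
        have : m ∣ 3 - 1 := hq3 ▸ hmdvd
        have := Nat.le_of_dvd (by norm_num) this
        omega
      exact h2 ⟨by rw [hnqm, hm2', hq3], rfl⟩
    · -- k ≥ 2
      have hqmgt : 1 < q * m := by
        have := hqprime.two_le
        nlinarith
      set y : ℕ := 2 ^ q ^ (k - 1) with hy
      have hid : cyclotomic n ℤ = Polynomial.expand ℤ (q ^ (k - 1)) (cyclotomic (q * m) ℤ) := by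
        have := zsyg_expand q m hqprime (k - 1)
        rwa [show k - 1 + 1 = k from by omega, hneq] at this
      have hev : e = (cyclotomic (q * m) ℤ).eval ((y : ℕ) : ℤ) := by
        rw [he, hid, expand_eval, hy]
        push_cast
        ring
      have hlt : (y - 1) ^ (q * m).totient < ((cyclotomic (q * m) ℤ).eval ((y : ℕ) : ℤ)).natAbs :=
        sub_one_pow_totient_lt_natAbs_cyclotomic_eval hqmgt (by
          have : q ≤ q ^ (k - 1) := Nat.le_self_pow (by omega) q
          have h2 : q ^ (k - 1) < 2 ^ q ^ (k - 1) := Nat.lt_two_pow_self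
          have := hqprime.two_le
          rw [hy]
          omega)
      have hCeq2 : ((cyclotomic (q * m) ℤ).eval ((y : ℕ) : ℤ)).natAbs = q := by
        rw [← hev, ← hC, hCq]
      rw [hCeq2] at hlt
      -- but y - 1 ≥ q
      have hyq : q ≤ y - 1 := by
        have h1 : q ≤ q ^ (k - 1) := Nat.le_self_pow (by omega) q
        have h2 : q ^ (k - 1) < 2 ^ q ^ (k - 1) := Nat.lt_two_pow_self
        have h3 : q < y := by rw [hy]; omega
        omega
      have : y - 1 ≤ (y - 1) ^ (q * m).totient :=
        Nat.le_self_pow (Nat.totient_pos.mpr (by omega)).ne' _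
      omega
  · -- a ≥ 3 case
    have htot : q - 1 ≤ n.totient := by
      have hdvd : q - 1 ∣ n.totient := by
        have := Nat.totient_dvd_of_dvd hqn
        rwa [Nat.totient_prime hqprime] at this
      exact Nat.le_of_dvd (Nat.totient_pos.mpr (by omega)) hdvd
    have hlt : (a - 1) ^ n.totient < C :=
      sub_one_pow_totient_lt_natAbs_cyclotomic_eval hn (by omega)
    have hchain : q ≤ (a - 1) ^ n.totient := by
      calc q ≤ 2 ^ (q - 1) := by have := Nat.lt_two_pow_self (n := q - 1); omega
        _ ≤ 2 ^ n.totient := Nat.pow_le_pow_right (by omega) htot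
        _ ≤ (a - 1) ^ n.totient := Nat.pow_le_pow_left (by omega) _
    omega
end
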